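/- arXiv:1911.04141 — 2 statements merged into one kernel-verified Lean document; each statement's English description precedes it below -/
import Mathlib

section
/- The integral ∫₀^∞ K₀(t)⁶ t (2 − 85 t² + 72 t⁴) dt = 15/2, where K₀ is the modified Bessel function of the zeroth order. -/
open MeasureTheory Real Set
open Filter Topology

noncomputable def I0 (t : ℝ) : ℝ := (1 / π) * ∫ θ in (0:ℝ)..π, Real.exp (t * Real.cos θ)

noncomputable def K0 (t : ℝ) : ℝ := ∫ u in Set.Ioi (0:ℝ), Real.exp (-t * Real.cosh u)


noncomputable def g (n : ℕ) (t : ℝ) : ℝ :=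
  ∫ u in Set.Ioi (0:ℝ), (Real.cosh u) ^ n * Real.exp (-(t * Real.cosh u))

lemma cosh_ge_half (u : ℝ) : (1 + u) / 2 ≤ Real.cosh u := by
  have h := Real.add_one_le_exp u
  have h2 := (Real.exp_pos (-u)).le
  rw [Real.cosh_eq]; nlinarith

lemma exp_half_le_cosh (u : ℝ) : Real.exp u / 2 ≤ Real.cosh u := by
  have h2 := (Real.exp_pos (-u)).le
  rw [Real.cosh_eq]; nlinarith

lemma self_le_mul_exp {x c : ℝ} (hc : 0 < c) : x ≤ c * Real.exp (x / c) := by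
  have h := Real.add_one_le_exp (x / c)
  have := Real.exp_pos (x / c)
  calc x = c * (x / c) := by field_simp
  _ ≤ c * Real.exp (x / c) := by nlinarith

lemma pow_le_exp_aux {x c : ℝ} (n : ℕ) (hx : 0 ≤ x) (hc : 0 < c) :
    x ^ n ≤ c ^ n * Real.exp (n * (x / c)) := by
  have h1 : x ≤ c * Real.exp (x / c) := self_le_mul_exp hc
  calc x ^ n ≤ (c * Real.exp (x / c)) ^ n := pow_le_pow_left₀ hx h1 n
  _ = c ^ n * Real.exp (n * (x / c)) := by
      rw [mul_pow, ← Real.exp_nat_mul]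

/-- Uniform pointwise exponential bound for the integrand. -/
lemma key_bound (n : ℕ) {t : ℝ} (ht : 0 < t) :
    ∃ C : ℝ, 0 ≤ C ∧ ∀ u : ℝ, 0 ≤ u →
      Real.cosh u ^ n * Real.exp (-(t * Real.cosh u)) ≤ C * Real.exp (-(t/4) * u) := by
  set c : ℝ := 2 * (n + 1) / t with hc
  have hcpos : 0 < c := by positivity
  refine ⟨c ^ n, by positivity, fun u hu => ?_⟩
  have hch : (0:ℝ) ≤ Real.cosh u := (Real.cosh_pos u).le
  have h1 : Real.cosh u ^ n ≤ c ^ n * Real.exp (n * (Real.cosh u / c)) :=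
    pow_le_exp_aux n hch hcpos
  have h2 : (n : ℝ) * (Real.cosh u / c) ≤ t / 2 * Real.cosh u := by
    have hn : (0:ℝ) ≤ n := Nat.cast_nonneg n
    have hd : Real.cosh u / c = Real.cosh u * t / (2*((n:ℝ)+1)) := by
      rw [hc]; field_simp
    rw [hd, mul_div_assoc', div_le_iff₀ (by positivity)]
    nlinarith
  have h3 : t / 2 * Real.cosh u - t * Real.cosh u ≤ -(t/4) * u - t/4 := by
    have := cosh_ge_half u
    nlinarith
  calc Real.cosh u ^ n * Real.exp (-(t * Real.cosh u))
      ≤ (c ^ n * Real.exp (n * (Real.cosh u / c))) * Real.exp (-(t * Real.cosh u)) := by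
        apply mul_le_mul_of_nonneg_right h1 (Real.exp_pos _).le
    _ = c ^ n * Real.exp (n * (Real.cosh u / c) - t * Real.cosh u) := by
        rw [mul_assoc, ← Real.exp_add]; ring_nf
    _ ≤ c ^ n * Real.exp (-(t/4) * u) := by
        apply mul_le_mul_of_nonneg_left _ (by positivity)
        apply Real.exp_le_exp.2
        have := Real.exp_pos (-(t/4) * u)
        nlinarith [h2, h3]

lemma cont_integrand (n : ℕ) (t : ℝ) :
    Continuous fun u => Real.cosh u ^ n * Real.exp (-(t * Real.cosh u)) := by
  continuity

lemma integrable_g (n : ℕ) {t : ℝ} (ht : 0 < t) :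
    IntegrableOn (fun u => Real.cosh u ^ n * Real.exp (-(t * Real.cosh u))) (Set.Ioi (0:ℝ)) := by
  obtain ⟨C, hC0, hC⟩ := key_bound n ht
  have hint : IntegrableOn (fun u => C * Real.exp (-(t/4) * u)) (Set.Ioi (0:ℝ)) :=
    (exp_neg_integrableOn_Ioi 0 (by positivity)).const_mul C
  apply Integrable.mono' hint ((cont_integrand n t).aestronglyMeasurable)
  filter_upwards [ae_restrict_mem measurableSet_Ioi] with u hu
  rw [Real.norm_eq_abs, abs_of_nonneg (by positivity)]
  exact hC u (le_of_lt hu)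

lemma g_nonneg (n : ℕ) (t : ℝ) : 0 ≤ g n t := by
  apply setIntegral_nonneg measurableSet_Ioi
  intro u _; positivity

lemma tendsto_integrand_atTop (n : ℕ) {t : ℝ} (ht : 0 < t) :
    Tendsto (fun u => Real.cosh u ^ n * Real.exp (-(t * Real.cosh u))) atTop (𝓝 0) := by
  obtain ⟨C, hC0, hC⟩ := key_bound n ht
  have hlim : Tendsto (fun u : ℝ => C * Real.exp (-(t/4) * u)) atTop (𝓝 0) := by
    rw [show (0:ℝ) = C * 0 by ring]
    apply Tendsto.const_mul
    apply Real.tendsto_exp_atBot.comp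
    apply Tendsto.const_mul_atTop_of_neg (by linarith : -(t/4) < 0) tendsto_id
  apply squeeze_zero' (g := fun u => C * Real.exp (-(t/4) * u)) ?_ ?_ hlim
  · filter_upwards [eventually_ge_atTop (0:ℝ)] with u hu; positivity
  · filter_upwards [eventually_ge_atTop (0:ℝ)] with u hu; exact hC u hu

lemma hasDerivAt_g (n : ℕ) {t : ℝ} (ht : 0 < t) :
    HasDerivAt (g n) (-(g (n+1) t)) t := by
  have main := hasDerivAt_integral_of_dominated_loc_of_deriv_le
    (F := fun s u => Real.cosh u ^ n * Real.exp (-(s * Real.cosh u)))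
    (F' := fun s u => -(Real.cosh u ^ (n+1) * Real.exp (-(s * Real.cosh u))))
    (μ := volume.restrict (Set.Ioi (0:ℝ))) (x₀ := t)
    (bound := fun u => Real.cosh u ^ (n+1) * Real.exp (-((t/2) * Real.cosh u)))
    (Metric.ball_mem_nhds t (half_pos ht))
    (Filter.Eventually.of_forall fun s => (cont_integrand n s).aestronglyMeasurable)
    (integrable_g n ht)
    (((cont_integrand (n+1) t).neg).aestronglyMeasurable)
    ?_ (integrable_g (n+1) (half_pos ht)) ?_
  · have h2 : HasDerivAt (fun s => ∫ u in Set.Ioi (0:ℝ),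
        Real.cosh u ^ n * Real.exp (-(s * Real.cosh u)))
        (∫ u in Set.Ioi (0:ℝ), -(Real.cosh u ^ (n+1) * Real.exp (-(t * Real.cosh u)))) t :=
      main.2
    have h3 : (∫ u in Set.Ioi (0:ℝ), -(Real.cosh u ^ (n+1) * Real.exp (-(t * Real.cosh u))))
        = -(g (n+1) t) := by
      rw [integral_neg]; rfl
    rw [h3] at h2
    exact h2
  · filter_upwards [ae_restrict_mem measurableSet_Ioi] with u hu
    intro s hs
    have hs2 : t/2 ≤ s := by
      have := abs_lt.1 (mem_ball_iff_norm.1 hs)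
      linarith [this.1]
    rw [norm_neg, Real.norm_eq_abs, abs_of_nonneg (by positivity)]
    apply mul_le_mul_of_nonneg_left _ (by positivity)
    apply Real.exp_le_exp.2
    have hch := (Real.cosh_pos u).le
    nlinarith
  · filter_upwards [ae_restrict_mem measurableSet_Ioi] with u hu
    intro s hs
    have h1 : HasDerivAt (fun s : ℝ => -(s * Real.cosh u)) (-Real.cosh u) s := by
      simpa using ((hasDerivAt_id s).mul_const (Real.cosh u)).fun_neg
    have h2 := (h1.exp).const_mul (Real.cosh u ^ n)
    refine h2.congr_deriv ?_
    rw [pow_succ]; ring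

lemma continuousOn_g (n : ℕ) : ContinuousOn (g n) (Set.Ioi (0:ℝ)) := by
  intro t ht
  exact ((hasDerivAt_g n ht).continuousAt).continuousWithinAt

/-- ODE in integral form: ∫ t sinh u e^{-t cosh u} = e^{-t}. -/
lemma integral_sinh_exp {t : ℝ} (ht : 0 < t) :
    ∫ u in Set.Ioi (0:ℝ), t * Real.sinh u * Real.exp (-(t * Real.cosh u)) = Real.exp (-t) := by
  have hderiv : ∀ u ∈ Set.Ioi (0:ℝ),
      HasDerivAt (fun u => -Real.exp (-(t * Real.cosh u)))
        (t * Real.sinh u * Real.exp (-(t * Real.cosh u))) u := by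
    intro u _
    have h1 : HasDerivAt (fun u : ℝ => -(t * Real.cosh u)) (-(t * Real.sinh u)) u := by
      simpa using ((Real.hasDerivAt_cosh u).const_mul t).fun_neg
    have := (h1.exp).fun_neg
    refine this.congr_deriv ?_
    ring
  have hint : IntegrableOn (fun u => t * Real.sinh u * Real.exp (-(t * Real.cosh u)))
      (Set.Ioi (0:ℝ)) := by
    apply Integrable.mono' ((integrable_g 1 ht).const_mul t)
      (Continuous.aestronglyMeasurable (by continuity))
    filter_upwards [ae_restrict_mem measurableSet_Ioi] with u hu
    have hsh : 0 ≤ Real.sinh u := Real.sinh_nonneg_iff.2 (le_of_lt hu)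
    have hsc : Real.sinh u ≤ Real.cosh u := by
      have := Real.cosh_sub_sinh u
      nlinarith [Real.exp_pos (-u)]
    rw [Real.norm_eq_abs, abs_of_nonneg (by positivity)]
    have h := Real.exp_pos (-(t * Real.cosh u))
    calc t * Real.sinh u * Real.exp (-(t * Real.cosh u))
        ≤ t * Real.cosh u * Real.exp (-(t * Real.cosh u)) :=
          mul_le_mul_of_nonneg_right (mul_le_mul_of_nonneg_left hsc ht.le) h.le
      _ = t * (Real.cosh u ^ 1 * Real.exp (-(t * Real.cosh u))) := by ring
  have htends : Tendsto (fun u => -Real.exp (-(t * Real.cosh u))) atTop (𝓝 0) := by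
    have h := (tendsto_integrand_atTop 0 ht).neg
    simp only [pow_zero, one_mul, neg_zero] at h
    exact h
  have hcont : ContinuousWithinAt (fun u => -Real.exp (-(t * Real.cosh u)))
      (Set.Ici (0:ℝ)) 0 := (Continuous.continuousWithinAt (by continuity))
  have := integral_Ioi_of_hasDerivAt_of_tendsto hcont hderiv hint htends
  rw [this]
  simp [Real.cosh_zero]

lemma ode_g {t : ℝ} (ht : 0 < t) : g 1 t = t * (g 2 t - g 0 t) := by
  have hderiv : ∀ u ∈ Set.Ioi (0:ℝ),
      HasDerivAt (fun u => Real.sinh u * Real.exp (-(t * Real.cosh u)))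
        (Real.cosh u ^ 1 * Real.exp (-(t * Real.cosh u)) -
          (t * (Real.cosh u ^ 2 * Real.exp (-(t * Real.cosh u))) -
           t * (Real.cosh u ^ 0 * Real.exp (-(t * Real.cosh u))))) u := by
    intro u _
    have h1 : HasDerivAt (fun u : ℝ => -(t * Real.cosh u)) (-(t * Real.sinh u)) u := by
      simpa using ((Real.hasDerivAt_cosh u).const_mul t).fun_neg
    have h2 := (Real.hasDerivAt_sinh u).mul h1.exp
    refine h2.congr_deriv ?_
    have hs := Real.sinh_sq u
    linear_combination (-(t * Real.exp (-(t * Real.cosh u)))) * hs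
  have hB2 : IntegrableOn (fun u => t * (Real.cosh u ^ 2 * Real.exp (-(t * Real.cosh u))))
      (Set.Ioi (0:ℝ)) := (integrable_g 2 ht).const_mul t
  have hB0 : IntegrableOn (fun u => t * (Real.cosh u ^ 0 * Real.exp (-(t * Real.cosh u))))
      (Set.Ioi (0:ℝ)) := (integrable_g 0 ht).const_mul t
  have hB : IntegrableOn (fun u => t * (Real.cosh u ^ 2 * Real.exp (-(t * Real.cosh u))) -
      t * (Real.cosh u ^ 0 * Real.exp (-(t * Real.cosh u)))) (Set.Ioi (0:ℝ)) := hB2.sub hB0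
  have h1int : IntegrableOn (fun u => Real.cosh u ^ 1 * Real.exp (-(t * Real.cosh u)))
      (Set.Ioi (0:ℝ)) := integrable_g 1 ht
  have hint : IntegrableOn (fun u => Real.cosh u ^ 1 * Real.exp (-(t * Real.cosh u)) -
      (t * (Real.cosh u ^ 2 * Real.exp (-(t * Real.cosh u))) -
       t * (Real.cosh u ^ 0 * Real.exp (-(t * Real.cosh u))))) (Set.Ioi (0:ℝ)) := h1int.sub hB
  have htends : Tendsto (fun u => Real.sinh u * Real.exp (-(t * Real.cosh u))) atTop (𝓝 0) := by
    apply squeeze_zero' (g := fun u => Real.cosh u ^ 1 * Real.exp (-(t * Real.cosh u)))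
      ?_ ?_ (tendsto_integrand_atTop 1 ht)
    · filter_upwards [eventually_ge_atTop (0:ℝ)] with u hu
      have := Real.sinh_nonneg_iff.2 hu
      positivity
    · filter_upwards [eventually_ge_atTop (0:ℝ)] with u hu
      have hsc : Real.sinh u ≤ Real.cosh u := by
        have := Real.cosh_sub_sinh u
        nlinarith [Real.exp_pos (-u)]
      have := (Real.exp_pos (-(t * Real.cosh u))).le
      simpa [pow_one] using mul_le_mul_of_nonneg_right hsc this
  have hcont : ContinuousWithinAt (fun u => Real.sinh u * Real.exp (-(t * Real.cosh u)))
      (Set.Ici (0:ℝ)) 0 := Continuous.continuousWithinAt (by continuity)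
  have hFTC := integral_Ioi_of_hasDerivAt_of_tendsto hcont hderiv hint htends
  rw [integral_sub h1int hB, integral_sub hB2 hB0,
    integral_const_mul, integral_const_mul] at hFTC
  simp only [Real.sinh_zero, zero_mul, sub_zero] at hFTC
  have h : g 1 t - (t * g 2 t - t * g 0 t) = 0 := hFTC
  linear_combination h

lemma g2_eq {t : ℝ} (ht : 0 < t) : g 2 t = g 0 t + g 1 t / t := by
  have h := ode_g ht
  field_simp
  linarith

lemma integrable_sinh_exp {t : ℝ} (ht : 0 < t) :
    IntegrableOn (fun u => t * Real.sinh u * Real.exp (-(t * Real.cosh u))) (Set.Ioi (0:ℝ)) := by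
  apply Integrable.mono' ((integrable_g 1 ht).const_mul t)
    (Continuous.aestronglyMeasurable (by continuity))
  filter_upwards [ae_restrict_mem measurableSet_Ioi] with u hu
  have hsh : 0 ≤ Real.sinh u := Real.sinh_nonneg_iff.2 (le_of_lt hu)
  have hsc : Real.sinh u ≤ Real.cosh u := by
    have := Real.cosh_sub_sinh u
    nlinarith [Real.exp_pos (-u)]
  have h := (Real.exp_pos (-(t * Real.cosh u))).le
  rw [Real.norm_eq_abs, abs_of_nonneg (by positivity)]
  calc t * Real.sinh u * Real.exp (-(t * Real.cosh u))
      ≤ t * Real.cosh u * Real.exp (-(t * Real.cosh u)) :=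
        mul_le_mul_of_nonneg_right (mul_le_mul_of_nonneg_left hsc ht.le) h
    _ = t * (Real.cosh u ^ 1 * Real.exp (-(t * Real.cosh u))) := by ring

lemma tg1_bounds {t : ℝ} (ht : 0 < t) :
    Real.exp (-t) ≤ t * g 1 t ∧ t * g 1 t ≤ Real.exp (-t) + t := by
  have heq : t * g 1 t = ∫ u in Set.Ioi (0:ℝ),
      t * (Real.cosh u ^ 1 * Real.exp (-(t * Real.cosh u))) := by
    unfold g; rw [← integral_const_mul]
  have hresid : IntegrableOn
      (fun u => t * (Real.cosh u ^ 1 * Real.exp (-(t * Real.cosh u))) -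
        t * Real.sinh u * Real.exp (-(t * Real.cosh u))) (Set.Ioi (0:ℝ)) :=
    ((integrable_g 1 ht).const_mul t).sub (integrable_sinh_exp ht)
  have hsplit : t * g 1 t = Real.exp (-t) + ∫ u in Set.Ioi (0:ℝ),
      (t * (Real.cosh u ^ 1 * Real.exp (-(t * Real.cosh u))) -
        t * Real.sinh u * Real.exp (-(t * Real.cosh u))) := by
    rw [heq, ← integral_sinh_exp ht, ← integral_add (integrable_sinh_exp ht) hresid]
    congr 1; funext u; ring
  have hR0 : 0 ≤ ∫ u in Set.Ioi (0:ℝ),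
      (t * (Real.cosh u ^ 1 * Real.exp (-(t * Real.cosh u))) -
        t * Real.sinh u * Real.exp (-(t * Real.cosh u))) := by
    apply setIntegral_nonneg measurableSet_Ioi
    intro u hu
    have hsc : Real.sinh u ≤ Real.cosh u := by
      have := Real.cosh_sub_sinh u
      nlinarith [Real.exp_pos (-u)]
    have h := (Real.exp_pos (-(t * Real.cosh u))).le
    have := mul_le_mul_of_nonneg_right (mul_le_mul_of_nonneg_left hsc ht.le) h
    simp only [pow_one]
    nlinarith
  have hRt : (∫ u in Set.Ioi (0:ℝ),
      (t * (Real.cosh u ^ 1 * Real.exp (-(t * Real.cosh u))) -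
        t * Real.sinh u * Real.exp (-(t * Real.cosh u)))) ≤ t := by
    have hle : ∀ u ∈ Set.Ioi (0:ℝ),
        t * (Real.cosh u ^ 1 * Real.exp (-(t * Real.cosh u))) -
          t * Real.sinh u * Real.exp (-(t * Real.cosh u)) ≤ t * Real.exp (-u) := by
      intro u hu
      have hcs : Real.cosh u - Real.sinh u = Real.exp (-u) := Real.cosh_sub_sinh u
      have hE1 : Real.exp (-(t * Real.cosh u)) ≤ 1 := by
        apply Real.exp_le_one_iff.2
        have := (Real.cosh_pos u).le
        nlinarith
      have hE0 := (Real.exp_pos (-(t * Real.cosh u))).le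
      have hexpu := (Real.exp_pos (-u)).le
      have : t * (Real.cosh u ^ 1 * Real.exp (-(t * Real.cosh u))) -
          t * Real.sinh u * Real.exp (-(t * Real.cosh u))
          = t * Real.exp (-u) * Real.exp (-(t * Real.cosh u)) := by
        rw [← hcs]; ring
      rw [this]
      have h2 := mul_le_mul_of_nonneg_left hE1 (by positivity : (0:ℝ) ≤ t * Real.exp (-u))
      simpa using h2
    calc (∫ u in Set.Ioi (0:ℝ),
        (t * (Real.cosh u ^ 1 * Real.exp (-(t * Real.cosh u))) -
          t * Real.sinh u * Real.exp (-(t * Real.cosh u))))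
        ≤ ∫ u in Set.Ioi (0:ℝ), t * Real.exp (-u) := by
          apply setIntegral_mono_on hresid
            (((exp_neg_integrableOn_Ioi 0 one_pos).const_mul t).congr
              (Filter.Eventually.of_forall fun u => by simp [neg_one_mul]))
            measurableSet_Ioi hle
      _ = t := by rw [integral_const_mul, integral_exp_neg_Ioi_zero, mul_one]
  constructor
  · rw [hsplit]; linarith
  · rw [hsplit]; linarith

lemma g0_le_log {t : ℝ} (h0 : 0 < t) (h1 : t < 1) : g 0 t ≤ 2 - Real.log t := by
  set L : ℝ := -Real.log t with hLdef
  have hL : 0 < L := by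
    have := Real.log_neg h0 h1
    simp [hLdef]; linarith
  have hunion : Set.Ioo (0:ℝ) L ∪ Set.Ici L = Set.Ioi 0 := Set.Ioo_union_Ici_eq_Ioi hL
  have hdisj : Disjoint (Set.Ioo (0:ℝ) L) (Set.Ici L) := by
    rw [Set.disjoint_left]
    rintro x ⟨_, hx2⟩ hx3
    exact absurd (Set.mem_Ici.1 hx3) (not_le.2 hx2)
  have hintIoo : IntegrableOn (fun u => Real.cosh u ^ 0 * Real.exp (-(t * Real.cosh u)))
      (Set.Ioo (0:ℝ) L) := (integrable_g 0 h0).mono_set Set.Ioo_subset_Ioi_self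
  have hintIci : IntegrableOn (fun u => Real.cosh u ^ 0 * Real.exp (-(t * Real.cosh u)))
      (Set.Ici L) := (integrable_g 0 h0).mono_set fun x hx => lt_of_lt_of_le hL hx
  have hsplit : g 0 t = (∫ u in Set.Ioo (0:ℝ) L, Real.cosh u ^ 0 * Real.exp (-(t * Real.cosh u)))
      + ∫ u in Set.Ici L, Real.cosh u ^ 0 * Real.exp (-(t * Real.cosh u)) := by
    unfold g
    rw [← hunion, setIntegral_union hdisj measurableSet_Ici hintIoo hintIci]
  have hb1 : (∫ u in Set.Ioo (0:ℝ) L, Real.cosh u ^ 0 * Real.exp (-(t * Real.cosh u))) ≤ L := by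
    have hc : ∀ u ∈ Set.Ioo (0:ℝ) L, Real.cosh u ^ 0 * Real.exp (-(t * Real.cosh u)) ≤ 1 := by
      intro u _
      rw [pow_zero, one_mul]
      apply Real.exp_le_one_iff.2
      have := (Real.cosh_pos u).le
      nlinarith
    calc (∫ u in Set.Ioo (0:ℝ) L, Real.cosh u ^ 0 * Real.exp (-(t * Real.cosh u)))
        ≤ ∫ _u in Set.Ioo (0:ℝ) L, (1:ℝ) := by
          apply setIntegral_mono_on hintIoo (integrableOn_const measure_Ioo_lt_top.ne)
            measurableSet_Ioo hc
      _ = L := by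
          simp [Real.volume_Ioo, ENNReal.toReal_ofReal hL.le, hL.le]
  have hb2 : (∫ u in Set.Ici L, Real.cosh u ^ 0 * Real.exp (-(t * Real.cosh u))) ≤ 2 := by
    have hc : ∀ u ∈ Set.Ici L, Real.cosh u ^ 0 * Real.exp (-(t * Real.cosh u))
        ≤ 2 / t * Real.exp (-u) := by
      intro u _
      rw [pow_zero, one_mul]
      have hcp := Real.cosh_pos u
      have h1' : Real.exp (-(t * Real.cosh u)) ≤ (t * Real.cosh u)⁻¹ := by
        rw [Real.exp_neg]
        apply inv_anti₀ (by positivity)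
        linarith [Real.add_one_le_exp (t * Real.cosh u)]
      have h2' : (t * Real.cosh u)⁻¹ ≤ (t * (Real.exp u / 2))⁻¹ := by
        apply inv_anti₀ (by positivity)
        have := exp_half_le_cosh u
        nlinarith
      have h3' : (t * (Real.exp u / 2))⁻¹ = 2 / t * Real.exp (-u) := by
        rw [Real.exp_neg]
        field_simp
      linarith
    have hint2 : IntegrableOn (fun u => 2 / t * Real.exp (-u)) (Set.Ici L) := by
      rw [integrableOn_Ici_iff_integrableOn_Ioi]
      exact ((exp_neg_integrableOn_Ioi L one_pos).congr
        (Filter.Eventually.of_forall fun u => by simp)).const_mul _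
    calc (∫ u in Set.Ici L, Real.cosh u ^ 0 * Real.exp (-(t * Real.cosh u)))
        ≤ ∫ u in Set.Ici L, 2 / t * Real.exp (-u) := by
          apply setIntegral_mono_on hintIci hint2 measurableSet_Ici hc
      _ = 2 / t * Real.exp (-L) := by
          rw [MeasureTheory.integral_Ici_eq_integral_Ioi, integral_const_mul,
            integral_exp_neg_Ioi]
      _ = 2 := by
          rw [hLdef, neg_neg, Real.exp_log h0]
          field_simp
  rw [hsplit]
  have : L = -Real.log t := hLdef
  linarith

lemma g_decay (n : ℕ) {t : ℝ} (h1 : 1 ≤ t) : g n t ≤ Real.exp (-t/2) * g n (1/2) := by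
  have ht : (0:ℝ) < t := lt_of_lt_of_le one_pos h1
  have hptw : ∀ u ∈ Set.Ioi (0:ℝ), Real.cosh u ^ n * Real.exp (-(t * Real.cosh u))
      ≤ Real.exp (-t/2) * (Real.cosh u ^ n * Real.exp (-((1/2) * Real.cosh u))) := by
    intro u _
    have hch := Real.one_le_cosh u
    have he : Real.exp (-(t * Real.cosh u))
        ≤ Real.exp (-t/2) * Real.exp (-((1/2) * Real.cosh u)) := by
      rw [← Real.exp_add]
      apply Real.exp_le_exp.2
      nlinarith
    calc Real.cosh u ^ n * Real.exp (-(t * Real.cosh u))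
        ≤ Real.cosh u ^ n * (Real.exp (-t/2) * Real.exp (-((1/2) * Real.cosh u))) :=
          mul_le_mul_of_nonneg_left he (by positivity)
      _ = Real.exp (-t/2) * (Real.cosh u ^ n * Real.exp (-((1/2) * Real.cosh u))) := by ring
  calc g n t ≤ ∫ u in Set.Ioi (0:ℝ),
        Real.exp (-t/2) * (Real.cosh u ^ n * Real.exp (-((1/2) * Real.cosh u))) := by
        apply setIntegral_mono_on (integrable_g n ht)
          ((integrable_g n one_half_pos).const_mul _) measurableSet_Ioi hptw
    _ = Real.exp (-t/2) * g n (1/2) := by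
        rw [integral_const_mul]; rfl

lemma mono_top (a b c : ℕ) (hab : 1 ≤ a + b) :
    Tendsto (fun t => t^c * (g 0 t)^a * (g 1 t)^b) atTop (𝓝 0) := by
  set M : ℝ := g 0 (1/2) + g 1 (1/2) with hM
  have hM0 : 0 ≤ M := add_nonneg (g_nonneg 0 _) (g_nonneg 1 _)
  have hlim : Tendsto (fun t : ℝ => M^(a+b) * (t^c * Real.exp (-t/2))) atTop (𝓝 0) := by
    have h1 : Tendsto (fun t : ℝ => (t/2)^c * Real.exp (-(t/2))) atTop (𝓝 0) :=
      (tendsto_pow_mul_exp_neg_atTop_nhds_zero c).comp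
        (tendsto_id.atTop_div_const two_pos)
    have h2 := (h1.const_mul ((2:ℝ)^c)).const_mul (M^(a+b))
    simp only [mul_zero] at h2
    apply h2.congr
    intro t
    rw [div_pow, neg_div]
    field_simp
  apply squeeze_zero' ?_ ?_ hlim
  · filter_upwards [eventually_ge_atTop (1:ℝ)] with t ht
    have := g_nonneg 0 t; have := g_nonneg 1 t
    positivity
  · filter_upwards [eventually_ge_atTop (1:ℝ)] with t ht
    have h0d := g_decay 0 ht
    have h1d := g_decay 1 ht
    have hg0 := g_nonneg 0 t
    have hg1 := g_nonneg 1 t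
    have he : Real.exp (-t/2) ≤ 1 := by
      apply Real.exp_le_one_iff.2; linarith
    have he0 : (0:ℝ) ≤ Real.exp (-t/2) := (Real.exp_pos _).le
    have hb0 : g 0 t ≤ Real.exp (-t/2) * M := by
      have : g 0 (1/2) ≤ M := by
        rw [hM]; linarith [g_nonneg 1 (1/2:ℝ)]
      nlinarith [g_decay 0 ht]
    have hb1 : g 1 t ≤ Real.exp (-t/2) * M := by
      have : g 1 (1/2) ≤ M := by
        rw [hM]; linarith [g_nonneg 0 (1/2:ℝ)]
      nlinarith [g_decay 1 ht]
    calc t^c * (g 0 t)^a * (g 1 t)^b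
        ≤ t^c * (Real.exp (-t/2) * M)^a * (Real.exp (-t/2) * M)^b := by
          apply mul_le_mul (mul_le_mul_of_nonneg_left (pow_le_pow_left₀ hg0 hb0 a)
            (by positivity)) (pow_le_pow_left₀ hg1 hb1 b) (by positivity) (by positivity)
      _ = t^c * (M^(a+b) * (Real.exp (-t/2))^(a+b)) := by
          rw [mul_pow, mul_pow, pow_add, pow_add]; ring
      _ ≤ t^c * (M^(a+b) * Real.exp (-t/2)) := by
          apply mul_le_mul_of_nonneg_left _ (by positivity)
          apply mul_le_mul_of_nonneg_left _ (by positivity)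
          apply pow_le_of_le_one he0 he (by omega)
      _ = M^(a+b) * (t^c * Real.exp (-t/2)) := by ring

lemma tendsto_t_log (a : ℕ) :
    Tendsto (fun t => t * (2 - Real.log t)^a) (𝓝[>](0:ℝ)) (𝓝 0) := by
  have T1 : Tendsto (fun r : ℝ => (r+2)^a * Real.exp (-(r+2))) atTop (𝓝 0) :=
    (tendsto_pow_mul_exp_neg_atTop_nhds_zero a).comp
      (tendsto_atTop_add_const_right atTop 2 tendsto_id)
  have T2 : Tendsto (fun r : ℝ => (r+2)^a * Real.exp (-r)) atTop (𝓝 0) := by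
    have h := T1.const_mul (Real.exp 2)
    simp only [mul_zero] at h
    apply h.congr
    intro r
    rw [show (-(r+2) : ℝ) = -r + -2 by ring, Real.exp_add,
      show Real.exp 2 * ((r+2)^a * (Real.exp (-r) * Real.exp (-2)))
        = (r+2)^a * Real.exp (-r) * (Real.exp 2 * Real.exp (-2)) from by ring,
      ← Real.exp_add]
    norm_num
  have T3 : Tendsto (fun s : ℝ => (2-s)^a * Real.exp s) atBot (𝓝 0) := by
    have h := T2.comp tendsto_neg_atBot_atTop
    apply h.congr
    intro s
    simp only [Function.comp_apply, neg_neg]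
    ring_nf
  have T4 := T3.comp Real.tendsto_log_nhdsGT_zero
  apply T4.congr'
  filter_upwards [self_mem_nhdsWithin] with t ht
  simp only [Function.comp_apply]
  rw [Real.exp_log ht]
  ring

lemma tg1_tendsto : Tendsto (fun t => t * g 1 t) (𝓝[>](0:ℝ)) (𝓝 1) := by
  have hlow : Tendsto (fun t : ℝ => Real.exp (-t)) (𝓝[>](0:ℝ)) (𝓝 1) := by
    have : Tendsto (fun t : ℝ => Real.exp (-t)) (𝓝 0) (𝓝 1) := by
      have := (Real.continuous_exp.comp continuous_neg).tendsto 0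
      simpa [Function.comp_def] using this
    exact this.mono_left nhdsWithin_le_nhds
  have hup : Tendsto (fun t : ℝ => Real.exp (-t) + t) (𝓝[>](0:ℝ)) (𝓝 1) := by
    have h2 : Tendsto (fun t : ℝ => t) (𝓝[>](0:ℝ)) (𝓝 0) :=
      tendsto_id.mono_left nhdsWithin_le_nhds
    simpa using hlow.add h2
  apply tendsto_of_tendsto_of_tendsto_of_le_of_le' hlow hup
  · filter_upwards [self_mem_nhdsWithin] with t ht
    exact (tg1_bounds ht).1
  · filter_upwards [self_mem_nhdsWithin] with t ht
    exact (tg1_bounds ht).2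

lemma mono_zero (a b c : ℕ) (hcb : b + 1 ≤ c) :
    Tendsto (fun t => t^c * (g 0 t)^a * (g 1 t)^b) (𝓝[>](0:ℝ)) (𝓝 0) := by
  have hlim : Tendsto (fun t : ℝ => 2^b * (t * (2 - Real.log t)^a)) (𝓝[>](0:ℝ)) (𝓝 0) := by
    have := (tendsto_t_log a).const_mul ((2:ℝ)^b)
    simpa using this
  apply squeeze_zero' ?_ ?_ hlim
  · filter_upwards [self_mem_nhdsWithin] with t ht
    have := g_nonneg 0 t; have := g_nonneg 1 t
    have ht' : (0:ℝ) < t := ht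
    positivity
  · filter_upwards [Ioo_mem_nhdsGT_of_mem (Set.left_mem_Ico.2 one_pos)] with t htm
    obtain ⟨ht, ht1⟩ := htm
    have hg0 := g_nonneg 0 t
    have hg1 := g_nonneg 1 t
    have hlogneg := Real.log_neg ht ht1
    have hg0ub : g 0 t ≤ 2 - Real.log t := g0_le_log ht ht1
    have hg1ub : g 1 t ≤ 2 / t := by
      rw [le_div_iff₀ ht]
      have h1 := (tg1_bounds ht).2
      have h2 : Real.exp (-t) ≤ 1 := Real.exp_le_one_iff.2 (by linarith)
      nlinarith
    have hbc : b ≤ c := le_trans (Nat.le_succ b) hcb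
    calc t^c * (g 0 t)^a * (g 1 t)^b
        ≤ t^c * (2 - Real.log t)^a * (2/t)^b := by
          apply mul_le_mul (mul_le_mul_of_nonneg_left (pow_le_pow_left₀ hg0 hg0ub a)
            (by positivity)) (pow_le_pow_left₀ hg1 hg1ub b) (by positivity)
            (mul_nonneg (pow_nonneg ht.le c) (pow_nonneg (by linarith) a))
      _ = 2^b * (t^(c-b) * (2 - Real.log t)^a) := by
          rw [div_pow, show c = (c-b)+b from (Nat.sub_add_cancel hbc).symm, pow_add]
          simp only [Nat.add_sub_cancel]
          field_simp
      _ ≤ 2^b * (t * (2 - Real.log t)^a) := by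
          have h1 : t^(c-b) ≤ t := by
            calc t^(c-b) ≤ t^1 := pow_le_pow_of_le_one ht.le ht1.le (by omega)
              _ = t := pow_one t
          apply mul_le_mul_of_nonneg_left _ (by positivity)
          apply mul_le_mul_of_nonneg_right h1 (pow_nonneg (by linarith) a)

noncomputable def Fn (t : ℝ) : ℝ :=
  t^2*(g 0 t)^6 - 41/2*t^4*(g 0 t)^6 + 15/2*t^6*(g 0 t)^6
  + 3*t^3*(g 0 t)^5*(g 1 t) - 27*t^5*(g 0 t)^5*(g 1 t)
  + 15/2*t^4*(g 0 t)^4*(g 1 t)^2 - 45/2*t^6*(g 0 t)^4*(g 1 t)^2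
  + 15*t^5*(g 0 t)^3*(g 1 t)^3 + 45/2*t^6*(g 0 t)^2*(g 1 t)^4
  - 15/2*t^6*(g 1 t)^6

lemma Fn_def (t : ℝ) : Fn t =
  t^2*(g 0 t)^6 - 41/2*t^4*(g 0 t)^6 + 15/2*t^6*(g 0 t)^6
  + 3*t^3*(g 0 t)^5*(g 1 t) - 27*t^5*(g 0 t)^5*(g 1 t)
  + 15/2*t^4*(g 0 t)^4*(g 1 t)^2 - 45/2*t^6*(g 0 t)^4*(g 1 t)^2
  + 15*t^5*(g 0 t)^3*(g 1 t)^3 + 45/2*t^6*(g 0 t)^2*(g 1 t)^4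
  - 15/2*t^6*(g 1 t)^6 := rfl

lemma hasDerivAt_Fn {t : ℝ} (ht : 0 < t) :
    HasDerivAt Fn ((g 0 t)^6 * (t * (2 - 85*t^2 + 72*t^4))) t := by
  have hy := hasDerivAt_g 0 ht
  have hq := hasDerivAt_g 1 ht
  have h1 := (hasDerivAt_pow 2 t).mul (hy.pow 6)
  have h2 := ((hasDerivAt_pow 4 t).const_mul (41/2 : ℝ)).mul (hy.pow 6)
  have h3 := ((hasDerivAt_pow 6 t).const_mul (15/2 : ℝ)).mul (hy.pow 6)
  have h4 := (((hasDerivAt_pow 3 t).const_mul (3 : ℝ)).mul (hy.pow 5)).mul hq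
  have h5 := (((hasDerivAt_pow 5 t).const_mul (27 : ℝ)).mul (hy.pow 5)).mul hq
  have h6 := (((hasDerivAt_pow 4 t).const_mul (15/2 : ℝ)).mul (hy.pow 4)).mul (hq.pow 2)
  have h7 := (((hasDerivAt_pow 6 t).const_mul (45/2 : ℝ)).mul (hy.pow 4)).mul (hq.pow 2)
  have h8 := (((hasDerivAt_pow 5 t).const_mul (15 : ℝ)).mul (hy.pow 3)).mul (hq.pow 3)
  have h9 := (((hasDerivAt_pow 6 t).const_mul (45/2 : ℝ)).mul (hy.pow 2)).mul (hq.pow 4)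
  have h10 := ((hasDerivAt_pow 6 t).const_mul (15/2 : ℝ)).mul (hq.pow 6)
  have H := ((((((((h1.sub h2).add h3).add h4).sub h5).add h6).sub h7).add h8).add h9).sub h10
  have hFn : HasDerivAt Fn _ t := H
  convert hFn using 1
  simp only [Pi.mul_apply, Pi.pow_apply, Nat.cast_ofNat, zero_add, Nat.reduceAdd, Nat.reduceSub]
  have h2eq : g 2 t = g 0 t + g 1 t / t := g2_eq ht
  rw [h2eq]
  field_simp
  ring

lemma Fn_tendsto_atTop : Tendsto Fn atTop (𝓝 0) := by
  have A1 : Tendsto (fun t => t^2*(g 0 t)^6) atTop (𝓝 0) := by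
    simpa using mono_top 6 0 2 (by norm_num)
  have A2 : Tendsto (fun t => t^4*(g 0 t)^6) atTop (𝓝 0) := by
    simpa using mono_top 6 0 4 (by norm_num)
  have A3 : Tendsto (fun t => t^6*(g 0 t)^6) atTop (𝓝 0) := by
    simpa using mono_top 6 0 6 (by norm_num)
  have A4 : Tendsto (fun t => t^3*(g 0 t)^5*(g 1 t)) atTop (𝓝 0) := by
    simpa using mono_top 5 1 3 (by norm_num)
  have A5 : Tendsto (fun t => t^5*(g 0 t)^5*(g 1 t)) atTop (𝓝 0) := by
    simpa using mono_top 5 1 5 (by norm_num)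
  have A6 : Tendsto (fun t => t^4*(g 0 t)^4*(g 1 t)^2) atTop (𝓝 0) := by
    simpa using mono_top 4 2 4 (by norm_num)
  have A7 : Tendsto (fun t => t^6*(g 0 t)^4*(g 1 t)^2) atTop (𝓝 0) := by
    simpa using mono_top 4 2 6 (by norm_num)
  have A8 : Tendsto (fun t => t^5*(g 0 t)^3*(g 1 t)^3) atTop (𝓝 0) := by
    simpa using mono_top 3 3 5 (by norm_num)
  have A9 : Tendsto (fun t => t^6*(g 0 t)^2*(g 1 t)^4) atTop (𝓝 0) := by
    simpa using mono_top 2 4 6 (by norm_num)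
  have A10 : Tendsto (fun t => t^6*(g 1 t)^6) atTop (𝓝 0) := by
    simpa using mono_top 0 6 6 (by norm_num)
  have H := ((((((((A1.sub (A2.const_mul (41/2 : ℝ))).add (A3.const_mul (15/2 : ℝ))).add
    (A4.const_mul (3:ℝ))).sub (A5.const_mul (27:ℝ))).add (A6.const_mul (15/2:ℝ))).sub
    (A7.const_mul (45/2:ℝ))).add (A8.const_mul (15:ℝ))).add (A9.const_mul (45/2:ℝ))).sub
    (A10.const_mul (15/2:ℝ))
  norm_num at H
  apply H.congr
  intro t
  rw [Fn_def]
  ring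

lemma Fn_tendsto_zero : Tendsto Fn (𝓝[>](0:ℝ)) (𝓝 (-(15/2))) := by
  have A1 : Tendsto (fun t => t^2*(g 0 t)^6) (𝓝[>](0:ℝ)) (𝓝 0) := by
    simpa using mono_zero 6 0 2 (by norm_num)
  have A2 : Tendsto (fun t => t^4*(g 0 t)^6) (𝓝[>](0:ℝ)) (𝓝 0) := by
    simpa using mono_zero 6 0 4 (by norm_num)
  have A3 : Tendsto (fun t => t^6*(g 0 t)^6) (𝓝[>](0:ℝ)) (𝓝 0) := by
    simpa using mono_zero 6 0 6 (by norm_num)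
  have A4 : Tendsto (fun t => t^3*(g 0 t)^5*(g 1 t)) (𝓝[>](0:ℝ)) (𝓝 0) := by
    simpa using mono_zero 5 1 3 (by norm_num)
  have A5 : Tendsto (fun t => t^5*(g 0 t)^5*(g 1 t)) (𝓝[>](0:ℝ)) (𝓝 0) := by
    simpa using mono_zero 5 1 5 (by norm_num)
  have A6 : Tendsto (fun t => t^4*(g 0 t)^4*(g 1 t)^2) (𝓝[>](0:ℝ)) (𝓝 0) := by
    simpa using mono_zero 4 2 4 (by norm_num)
  have A7 : Tendsto (fun t => t^6*(g 0 t)^4*(g 1 t)^2) (𝓝[>](0:ℝ)) (𝓝 0) := by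
    simpa using mono_zero 4 2 6 (by norm_num)
  have A8 : Tendsto (fun t => t^5*(g 0 t)^3*(g 1 t)^3) (𝓝[>](0:ℝ)) (𝓝 0) := by
    simpa using mono_zero 3 3 5 (by norm_num)
  have A9 : Tendsto (fun t => t^6*(g 0 t)^2*(g 1 t)^4) (𝓝[>](0:ℝ)) (𝓝 0) := by
    simpa using mono_zero 2 4 6 (by norm_num)
  have A10 : Tendsto (fun t => t^6*(g 1 t)^6) (𝓝[>](0:ℝ)) (𝓝 1) := by
    have h := tg1_tendsto.pow 6
    norm_num at h
    apply h.congr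
    intro t
    rw [mul_pow]
  have H := ((((((((A1.sub (A2.const_mul (41/2 : ℝ))).add (A3.const_mul (15/2 : ℝ))).add
    (A4.const_mul (3:ℝ))).sub (A5.const_mul (27:ℝ))).add (A6.const_mul (15/2:ℝ))).sub
    (A7.const_mul (45/2:ℝ))).add (A8.const_mul (15:ℝ))).add (A9.const_mul (45/2:ℝ))).sub
    (A10.const_mul (15/2:ℝ))
  norm_num at H
  apply H.congr
  intro t
  rw [Fn_def]
  ring

lemma contOn_integrand : ContinuousOn (fun t => (g 0 t)^6 * (t * (2 - 85*t^2 + 72*t^4)))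
    (Set.Ioi (0:ℝ)) := by
  apply ContinuousOn.mul ((continuousOn_g 0).pow 6)
  exact (Continuous.continuousOn (by continuity))

lemma integrable_integrand :
    IntegrableOn (fun t => (g 0 t)^6 * (t * (2 - 85*t^2 + 72*t^4))) (Set.Ioi (0:ℝ)) := by
  have hunion : Set.Ioo (0:ℝ) 1 ∪ Set.Ici 1 = Set.Ioi 0 := Set.Ioo_union_Ici_eq_Ioi one_pos
  rw [← hunion]
  apply IntegrableOn.union
  · -- on Ioo 0 1 : bounded by constant
    apply Integrable.mono' ((integrableOn_const (C := (26:ℝ)^6 * 159)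
      measure_Ioo_lt_top.ne))
    · exact (contOn_integrand.mono Set.Ioo_subset_Ioi_self).aestronglyMeasurable
        measurableSet_Ioo
    filter_upwards [ae_restrict_mem measurableSet_Ioo] with t htm
    obtain ⟨ht, ht1⟩ := htm
    have hg0 := g_nonneg 0 t
    set s : ℝ := (t⁻¹) ^ ((1:ℝ)/24) with hs
    have hti : (1:ℝ) ≤ t⁻¹ := (one_le_inv_iff₀.2 ⟨ht, ht1.le⟩)
    have hs1 : (1:ℝ) ≤ s := Real.one_le_rpow hti (by norm_num)
    have hlog : g 0 t ≤ 26 * s := by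
      have h1 : g 0 t ≤ 2 - Real.log t := g0_le_log ht ht1
      have h2 : -Real.log t = Real.log t⁻¹ := (Real.log_inv t).symm
      have h3 : Real.log t⁻¹ ≤ (t⁻¹) ^ ((1:ℝ)/24) / (1/24) :=
        Real.log_le_rpow_div (by positivity) (by norm_num)
      have h4 : (t⁻¹) ^ ((1:ℝ)/24) / (1/24) = 24 * s := by
        rw [hs]; ring
      linarith
    have hpow : (g 0 t)^6 ≤ 26^6 * s^6 := by
      calc (g 0 t)^6 ≤ (26*s)^6 := pow_le_pow_left₀ hg0 hlog 6
        _ = 26^6 * s^6 := by rw [mul_pow]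
    have hs6 : s^6 * t ≤ 1 := by
      have e1 : s^6 = (t⁻¹) ^ ((6:ℝ)/24) := by
        rw [hs, ← Real.rpow_natCast ((t⁻¹) ^ ((1:ℝ)/24)) 6, ← Real.rpow_mul (by positivity)]
        norm_num
      have e2 : (t⁻¹ : ℝ) ^ ((6:ℝ)/24) = (t ^ ((6:ℝ)/24))⁻¹ := Real.inv_rpow ht.le _
      have e3 : s^6 * t = t ^ ((1:ℝ) - 6/24) := by
        rw [e1, e2, Real.rpow_sub ht, Real.rpow_one]
        field_simp
      rw [e3]
      exact Real.rpow_le_one ht.le ht1.le (by norm_num)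
    have hpoly : |2 - 85*t^2 + 72*t^4| ≤ 159 := by
      have h2 : t^2 ≤ 1 := by nlinarith
      have h4 : t^4 ≤ 1 := by nlinarith
      rw [abs_le]
      constructor <;> nlinarith
    rw [Real.norm_eq_abs, abs_mul, abs_pow, abs_of_nonneg hg0, abs_mul, abs_of_pos ht]
    calc (g 0 t)^6 * (t * |2 - 85*t^2 + 72*t^4|)
        ≤ (26^6 * s^6) * (t * 159) := by
          apply mul_le_mul hpow (mul_le_mul_of_nonneg_left hpoly ht.le)
            (by positivity) (by positivity)
      _ = 26^6 * 159 * (s^6 * t) := by ring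
      _ ≤ 26^6 * 159 * 1 := by
          apply mul_le_mul_of_nonneg_left hs6 (by norm_num)
      _ = 26^6 * 159 := by norm_num
  · -- on Ici 1 : exponential decay
    set M0 : ℝ := g 0 (1/2) with hM0
    have hM00 : 0 ≤ M0 := g_nonneg 0 _
    apply Integrable.mono' (g := fun t => (M0^6 * 159 * 5^5) * Real.exp (-2*t))
    · show IntegrableOn (fun t => (M0^6 * 159 * 5^5) * Real.exp (-2*t)) (Set.Ici 1) volume
      rw [integrableOn_Ici_iff_integrableOn_Ioi]
      exact (exp_neg_integrableOn_Ioi 1 two_pos).const_mul _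
    · exact (contOn_integrand.mono fun x (hx : x ∈ Set.Ici (1:ℝ)) => (lt_of_lt_of_le one_pos hx : (0:ℝ) < x)).aestronglyMeasurable
        measurableSet_Ici
    filter_upwards [ae_restrict_mem measurableSet_Ici] with t ht1
    have ht : (0:ℝ) < t := lt_of_lt_of_le one_pos ht1
    have hg0 := g_nonneg 0 t
    have hdec : g 0 t ≤ Real.exp (-t/2) * M0 := g_decay 0 ht1
    have hpoly : |2 - 85*t^2 + 72*t^4| ≤ 159 * t^4 := by
      rw [abs_le]
      have h2 : 1 ≤ t^2 := one_le_pow₀ ht1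
      have h4 : 1 ≤ t^4 := one_le_pow₀ ht1
      have h24 : t^2 ≤ t^4 := by nlinarith
      constructor <;> nlinarith
    have ht5 : t^5 ≤ 5^5 * Real.exp t := by
      have := pow_le_exp_aux (x := t) (c := 5) 5 ht.le (by norm_num)
      have h55 : ((5:ℕ):ℝ) * (t/5) = t := by push_cast; ring
      rw [h55] at this
      exact_mod_cast this
    rw [Real.norm_eq_abs, abs_mul, abs_pow, abs_of_nonneg hg0, abs_mul, abs_of_pos ht]
    calc (g 0 t)^6 * (t * |2 - 85*t^2 + 72*t^4|)
        ≤ (Real.exp (-t/2) * M0)^6 * (t * (159 * t^4)) := by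
          apply mul_le_mul (pow_le_pow_left₀ hg0 hdec 6)
            (mul_le_mul_of_nonneg_left hpoly ht.le) (by positivity) (by positivity)
      _ = M0^6 * 159 * ((Real.exp (-t/2))^6 * t^5) := by ring
      _ ≤ M0^6 * 159 * ((Real.exp (-t/2))^6 * (5^5 * Real.exp t)) := by
          apply mul_le_mul_of_nonneg_left (mul_le_mul_of_nonneg_left ht5 (by positivity))
            (by positivity)
      _ = (M0^6 * 159 * 5^5) * ((Real.exp (-t/2))^6 * Real.exp t) := by ring
      _ = (M0^6 * 159 * 5^5) * Real.exp (-2*t) := by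
          rw [← Real.exp_nat_mul, ← Real.exp_add,
            show ((6:ℕ):ℝ) * (-t/2) + t = -2*t by push_cast; ring]

lemma integral_Ioi_eps {ε : ℝ} (hε : 0 < ε) :
    ∫ t in Set.Ioi ε, (g 0 t)^6 * (t * (2 - 85*t^2 + 72*t^4)) = -Fn ε := by
  have h := integral_Ioi_of_hasDerivAt_of_tendsto
    (f := Fn) (f' := fun t => (g 0 t)^6 * (t * (2 - 85*t^2 + 72*t^4))) (a := ε) (m := 0)
    ((hasDerivAt_Fn hε).continuousAt.continuousWithinAt)
    (fun x hx => hasDerivAt_Fn (lt_trans hε hx))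
    (integrable_integrand.mono_set (Set.Ioi_subset_Ioi hε.le))
    Fn_tendsto_atTop
  rw [h, zero_sub]

theorem main_g : ∫ t in Set.Ioi (0:ℝ), (g 0 t)^6 * (t * (2 - 85*t^2 + 72*t^4)) = 15 / 2 := by
  set f : ℝ → ℝ := fun t => (g 0 t)^6 * (t * (2 - 85*t^2 + 72*t^4)) with hf
  have hseq : ∀ n : ℕ, (0:ℝ) < ((n:ℝ)+1)⁻¹ := fun n => by positivity
  have hmono : Monotone (fun n : ℕ => Set.Ioi (((n:ℝ)+1)⁻¹)) := by
    intro n m hnm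
    apply Set.Ioi_subset_Ioi
    apply inv_anti₀ (by positivity)
    exact_mod_cast add_le_add_left (Nat.cast_le.2 hnm) 1
  have hunion : (⋃ n : ℕ, Set.Ioi (((n:ℝ)+1)⁻¹)) = Set.Ioi (0:ℝ) := by
    ext x
    simp only [Set.mem_iUnion, Set.mem_Ioi]
    constructor
    · rintro ⟨n, hn⟩
      exact lt_trans (hseq n) hn
    · intro hx
      obtain ⟨n, hn⟩ := exists_nat_one_div_lt hx
      exact ⟨n, by rwa [one_div] at hn⟩
  have h1 : Tendsto (fun n : ℕ => ∫ t in Set.Ioi (((n:ℝ)+1)⁻¹), f t) atTop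
      (𝓝 (∫ t in Set.Ioi (0:ℝ), f t)) := by
    have := tendsto_setIntegral_of_monotone (fun n : ℕ => measurableSet_Ioi) hmono
      (by rw [hunion]; exact integrable_integrand)
    rwa [hunion] at this
  have h2 : (fun n : ℕ => ∫ t in Set.Ioi (((n:ℝ)+1)⁻¹), f t)
      = fun n : ℕ => -Fn (((n:ℝ)+1)⁻¹) := by
    funext n
    exact integral_Ioi_eps (hseq n)
  have h3 : Tendsto (fun n : ℕ => -Fn (((n:ℝ)+1)⁻¹)) atTop (𝓝 (15/2)) := by
    have hto : Tendsto (fun n : ℕ => ((n:ℝ)+1)⁻¹) atTop (𝓝[>](0:ℝ)) := by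
      apply tendsto_nhdsWithin_of_tendsto_nhds_of_eventually_within
      · have := tendsto_one_div_add_atTop_nhds_zero_nat (𝕜 := ℝ)
        simpa [one_div] using this
      · exact Filter.Eventually.of_forall fun n => hseq n
    have := (Fn_tendsto_zero.comp hto).neg
    norm_num at this
    exact this
  rw [h2] at h1
  exact tendsto_nhds_unique h1 h3

theorem stmt4 :
    ∫ t in Set.Ioi (0:ℝ), (K0 t)^6 * (t * (2 - 85 * t^2 + 72 * t^4)) = 15 / 2 := by
  have hK : (fun t : ℝ => (K0 t)^6 * (t * (2 - 85 * t^2 + 72 * t^4)))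
      = fun t : ℝ => (g 0 t)^6 * (t * (2 - 85 * t^2 + 72 * t^4)) := by
    funext t
    have h : K0 t = g 0 t := by
      unfold K0 g
      simp only [pow_zero, one_mul, neg_mul]
    rw [h]
  rw [hK]
  exact main_g
end

section
/- For every integer n ≥ 2, the ℚ-vector space spanned by { ∫₀^∞ K₀(t)^n t^{2k+1} dt : k ∈ ℤ, k ≥ 0 } has dimension at most ⌊(n+1)/2⌋, and the set {1} ∪ { ∫₀^∞ K₀(t)^n t^{2k+1} dt : 0 ≤ k ≤ (n−1)/2 } is linearly dependent over ℚ. -/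
open MeasureTheory Real Set

noncomputable def Kd (t : ℝ) : ℝ := ∫ u in Set.Ioi (0:ℝ), Real.cosh u * Real.exp (-t * Real.cosh u)

noncomputable def Kdd (t : ℝ) : ℝ := ∫ u in Set.Ioi (0:ℝ), Real.cosh u ^ 2 * Real.exp (-t * Real.cosh u)

open Filter Topology

lemma pb (m : ℝ) {c u : ℝ} (hc : 0 < c) (hu : 0 ≤ u) :
    Real.exp (m * u - c * Real.exp u) ≤ Real.exp (2*(m+1)^2/c) * Real.exp (-u) := by
  rw [← Real.exp_add]
  apply Real.exp_le_exp.2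
  have hE : 1 + u + u^2/2 ≤ Real.exp u := by
    have := Real.sum_le_exp_of_nonneg hu 3
    simp [Finset.sum_range_succ] at this
    nlinarith [this]
  have h2 : c * (1 + u + u^2/2) ≤ c * Real.exp u := by nlinarith
  have hD : c * (2*(m+1)^2/c) = 2*(m+1)^2 := by field_simp
  nlinarith [sq_nonneg (c*u - 2*(m+1)), hD, mul_pos hc hc, mul_nonneg hc.le hu, h2]

lemma int_master (m : ℝ) {c : ℝ} (hc : 0 < c) :
    IntegrableOn (fun u => Real.exp (m*u - c * Real.exp u)) (Set.Ioi (0:ℝ)) := by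
  apply Integrable.mono' (g := fun u => Real.exp (2*(m+1)^2/c) * Real.exp (-u))
  · have h1 : IntegrableOn (fun u : ℝ => Real.exp (-u)) (Set.Ioi (0:ℝ)) := by
      simpa using exp_neg_integrableOn_Ioi (0:ℝ) one_pos
    exact h1.const_mul _
  · exact (Continuous.aestronglyMeasurable (by continuity)).restrict
  · filter_upwards [ae_restrict_mem measurableSet_Ioi] with u hu
    rw [Real.norm_eq_abs, abs_of_pos (Real.exp_pos _)]
    exact pb m hc (le_of_lt hu)

lemma cosh_ge : ∀ u : ℝ, Real.exp u / 2 ≤ Real.cosh u := by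
  intro u; rw [Real.cosh_eq]
  have := (Real.exp_pos (-u)).le
  linarith

lemma cosh_le {u : ℝ} (hu : 0 ≤ u) : Real.cosh u ≤ Real.exp u := by
  rw [Real.cosh_eq]
  have h := Real.exp_le_exp.2 (neg_le_self hu)
  linarith

lemma cosh_pow_exp_le {t : ℝ} (ht : 0 < t) (p : ℕ) {u : ℝ} (hu : 0 ≤ u) :
    Real.cosh u ^ p * Real.exp (-t * Real.cosh u) ≤ Real.exp ((p:ℝ)*u - (t/2) * Real.exp u) := by
  have h1 : Real.cosh u ^ p ≤ Real.exp ((p:ℝ)*u) := by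
    calc Real.cosh u ^ p ≤ Real.exp u ^ p := by
          apply pow_le_pow_left₀ (by positivity) (cosh_le hu)
      _ = Real.exp ((p:ℝ)*u) := by rw [← Real.exp_nat_mul]
  have h2 : Real.exp (-t * Real.cosh u) ≤ Real.exp (-(t/2) * Real.exp u) := by
    apply Real.exp_le_exp.2
    have := cosh_ge u
    nlinarith
  calc Real.cosh u ^ p * Real.exp (-t * Real.cosh u)
      ≤ Real.exp ((p:ℝ)*u) * Real.exp (-(t/2) * Real.exp u) := by
        apply mul_le_mul h1 h2 (Real.exp_pos _).le (Real.exp_pos _).le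
    _ = Real.exp ((p:ℝ)*u - (t/2) * Real.exp u) := by rw [← Real.exp_add]; ring_nf

lemma cosh_int {t : ℝ} (ht : 0 < t) (p : ℕ) :
    IntegrableOn (fun u => Real.cosh u ^ p * Real.exp (-t * Real.cosh u)) (Set.Ioi (0:ℝ)) := by
  apply Integrable.mono' (int_master (p:ℝ) (half_pos ht))
  · exact (Continuous.aestronglyMeasurable (by continuity)).restrict
  · filter_upwards [ae_restrict_mem measurableSet_Ioi] with u hu
    rw [Real.norm_eq_abs, abs_of_pos (by positivity)]
    exact cosh_pow_exp_le ht p (le_of_lt hu)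

lemma sinh_ge {u : ℝ} (hu : 0 ≤ u) : (Real.exp u - 1) / 2 ≤ Real.sinh u := by
  rw [Real.sinh_eq]
  have h := Real.exp_le_exp.2 (neg_nonpos_of_nonneg hu)
  simp only [Real.exp_zero] at h
  linarith

lemma cosh_exp_sinh_le {t : ℝ} (ht : 0 < t) (p : ℕ) {u : ℝ} (hu : 0 ≤ u) :
    Real.cosh u ^ p * Real.exp (-t * Real.sinh u) ≤
      Real.exp (t/2) * Real.exp ((p:ℝ)*u - (t/2) * Real.exp u) := by
  have h1 : Real.cosh u ^ p ≤ Real.exp ((p:ℝ)*u) := by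
    calc Real.cosh u ^ p ≤ Real.exp u ^ p := by
          apply pow_le_pow_left₀ (by positivity) (cosh_le hu)
      _ = Real.exp ((p:ℝ)*u) := by rw [← Real.exp_nat_mul]
  have h2 : Real.exp (-t * Real.sinh u) ≤ Real.exp (t/2 - (t/2) * Real.exp u) := by
    apply Real.exp_le_exp.2
    have := sinh_ge hu
    nlinarith
  calc Real.cosh u ^ p * Real.exp (-t * Real.sinh u)
      ≤ Real.exp ((p:ℝ)*u) * Real.exp (t/2 - (t/2) * Real.exp u) := by
        apply mul_le_mul h1 h2 (Real.exp_pos _).le (Real.exp_pos _).le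
    _ = Real.exp (t/2) * Real.exp ((p:ℝ)*u - (t/2) * Real.exp u) := by
        rw [← Real.exp_add, ← Real.exp_add]; ring_nf

lemma sinh_int {t : ℝ} (ht : 0 < t) (p : ℕ) :
    IntegrableOn (fun u => Real.cosh u ^ p * Real.exp (-t * Real.sinh u)) (Set.Ioi (0:ℝ)) := by
  apply Integrable.mono' ((int_master (p:ℝ) (half_pos ht)).const_mul (Real.exp (t/2)))
  · exact (Continuous.aestronglyMeasurable (by continuity)).restrict
  · filter_upwards [ae_restrict_mem measurableSet_Ioi] with u hu
    rw [Real.norm_eq_abs, abs_of_pos (by positivity)]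
    exact cosh_exp_sinh_le ht p (le_of_lt hu)

lemma K0_int {t : ℝ} (ht : 0 < t) :
    IntegrableOn (fun u => Real.exp (-t * Real.cosh u)) (Set.Ioi (0:ℝ)) := by
  have := cosh_int ht 0
  simpa using this

lemma Kd_int {t : ℝ} (ht : 0 < t) :
    IntegrableOn (fun u => Real.cosh u * Real.exp (-t * Real.cosh u)) (Set.Ioi (0:ℝ)) := by
  have := cosh_int ht 1
  simp only [pow_one] at this
  exact this

lemma Kdd_int {t : ℝ} (ht : 0 < t) :
    IntegrableOn (fun u => Real.cosh u ^ 2 * Real.exp (-t * Real.cosh u)) (Set.Ioi (0:ℝ)) :=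
  cosh_int ht 2

lemma K0_pos {t : ℝ} (ht : 0 < t) : 0 < K0 t := by
  have hnn : 0 ≤ᵐ[volume.restrict (Set.Ioi (0:ℝ))] fun u => Real.exp (-t * Real.cosh u) :=
    Filter.Eventually.of_forall fun u => (Real.exp_pos _).le
  rw [K0]
  apply (setIntegral_pos_iff_support_of_nonneg_ae hnn (K0_int ht)).2
  have hs : (Function.support fun u : ℝ => Real.exp (-t * Real.cosh u)) = Set.univ := by
    ext u; simpa [Function.support] using (Real.exp_pos (-t * Real.cosh u)).ne'
  rw [hs, Set.univ_inter, Real.volume_Ioi]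
  simp

lemma Kd_pos {t : ℝ} (ht : 0 < t) : 0 < Kd t := by
  have hnn : 0 ≤ᵐ[volume.restrict (Set.Ioi (0:ℝ))] fun u => Real.cosh u * Real.exp (-t * Real.cosh u) :=
    Filter.Eventually.of_forall fun u =>
      mul_nonneg (le_trans zero_le_one (Real.one_le_cosh u)) (Real.exp_pos _).le
  rw [Kd]
  apply (setIntegral_pos_iff_support_of_nonneg_ae hnn (Kd_int ht)).2
  have hs : (Function.support fun u : ℝ => Real.cosh u * Real.exp (-t * Real.cosh u)) = Set.univ := by
    ext u
    have h1 : (0:ℝ) < Real.cosh u := lt_of_lt_of_le one_pos (Real.one_le_cosh u)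
    simpa [Function.support] using (mul_pos h1 (Real.exp_pos (-t * Real.cosh u))).ne'
  rw [hs, Set.univ_inter, Real.volume_Ioi]
  simp

lemma K0_hasDeriv {t : ℝ} (ht : 0 < t) : HasDerivAt K0 (-Kd t) t := by
  have key := hasDerivAt_integral_of_dominated_loc_of_deriv_le (μ := volume.restrict (Set.Ioi (0:ℝ)))
    (F := fun x u => Real.exp (-x * Real.cosh u))
    (F' := fun x u => Real.exp (-x * Real.cosh u) * (-Real.cosh u))
    (x₀ := t) (bound := fun u => Real.cosh u * Real.exp (-(t/2) * Real.cosh u))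
    (Metric.ball_mem_nhds t (half_pos ht)) ?_ ?_ ?_ ?_ ?_ ?_
  · have h2 : (∫ u in Set.Ioi (0:ℝ), Real.exp (-t * Real.cosh u) * (-Real.cosh u)) = -Kd t := by
      rw [Kd, ← integral_neg]
      apply setIntegral_congr_fun measurableSet_Ioi
      intro u _; ring
    rw [h2] at key
    exact key.2
  · filter_upwards with x
    exact (Continuous.aestronglyMeasurable (by continuity)).restrict
  · exact K0_int ht
  · exact (Continuous.aestronglyMeasurable (by continuity)).restrict
  · filter_upwards [ae_restrict_mem measurableSet_Ioi] with u hu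
    intro x hx
    rw [Metric.mem_ball, Real.dist_eq, abs_lt] at hx
    have hx2 : t/2 < x := by linarith [hx.1]
    have hrw : Real.exp (-x * Real.cosh u) * -Real.cosh u
        = -(Real.cosh u * Real.exp (-x * Real.cosh u)) := by ring
    rw [Real.norm_eq_abs, hrw, abs_neg,
      abs_of_pos (mul_pos (lt_of_lt_of_le one_pos (Real.one_le_cosh u)) (Real.exp_pos _))]
    apply mul_le_mul_of_nonneg_left _ (le_trans zero_le_one (Real.one_le_cosh u))
    apply Real.exp_le_exp.2
    have hcu := Real.one_le_cosh u
    nlinarith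
  · simpa [IntegrableOn] using cosh_int (half_pos ht) 1
  · filter_upwards with u
    intro x _
    have : HasDerivAt (fun x : ℝ => -x * Real.cosh u) (-Real.cosh u) x := by
      simpa using (hasDerivAt_id x).neg.mul_const (Real.cosh u)
    exact this.exp

lemma Kd_hasDeriv {t : ℝ} (ht : 0 < t) : HasDerivAt Kd (-Kdd t) t := by
  have key := hasDerivAt_integral_of_dominated_loc_of_deriv_le (μ := volume.restrict (Set.Ioi (0:ℝ)))
    (F := fun x u => Real.cosh u * Real.exp (-x * Real.cosh u))
    (F' := fun x u => Real.cosh u * (Real.exp (-x * Real.cosh u) * (-Real.cosh u)))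
    (x₀ := t) (bound := fun u => Real.cosh u ^ 2 * Real.exp (-(t/2) * Real.cosh u))
    (Metric.ball_mem_nhds t (half_pos ht)) ?_ ?_ ?_ ?_ ?_ ?_
  · have h2 : (∫ u in Set.Ioi (0:ℝ), Real.cosh u * (Real.exp (-t * Real.cosh u) * (-Real.cosh u))) = -Kdd t := by
      rw [Kdd, ← integral_neg]
      apply setIntegral_congr_fun measurableSet_Ioi
      intro u _; ring
    rw [h2] at key
    exact key.2
  · filter_upwards with x
    exact (Continuous.aestronglyMeasurable (by continuity)).restrict
  · exact Kd_int ht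
  · exact (Continuous.aestronglyMeasurable (by continuity)).restrict
  · filter_upwards [ae_restrict_mem measurableSet_Ioi] with u hu
    intro x hx
    rw [Metric.mem_ball, Real.dist_eq, abs_lt] at hx
    have hx2 : t/2 < x := by linarith [hx.1]
    have hcu := Real.one_le_cosh u
    have hrw : Real.cosh u * (Real.exp (-x * Real.cosh u) * -Real.cosh u)
        = -(Real.cosh u ^ 2 * Real.exp (-x * Real.cosh u)) := by ring
    rw [Real.norm_eq_abs, hrw, abs_neg, abs_of_pos (by positivity)]
    apply mul_le_mul_of_nonneg_left _ (by positivity)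
    apply Real.exp_le_exp.2
    nlinarith
  · exact cosh_int (half_pos ht) 2
  · filter_upwards with u
    intro x _
    have : HasDerivAt (fun x : ℝ => -x * Real.cosh u) (-Real.cosh u) x := by
      simpa using (hasDerivAt_id x).neg.mul_const (Real.cosh u)
    exact (this.exp).const_mul (Real.cosh u)

lemma ftc0 {f f' : ℝ → ℝ} {l L : ℝ} (hd : ∀ x ∈ Set.Ioi (0:ℝ), HasDerivAt f (f' x) x)
    (hi : IntegrableOn f' (Set.Ioi (0:ℝ))) (h0 : Tendsto f (𝓝[>] (0:ℝ)) (𝓝 l))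
    (hT : Tendsto f atTop (𝓝 L)) : ∫ x in Set.Ioi (0:ℝ), f' x = L - l := by
  set F : ℝ → ℝ := fun x => if x ≤ 0 then l else f x with hF
  have hFf : ∀ x ∈ Set.Ioi (0:ℝ), F x = f x := by
    intro x hx
    simp only [hF, if_neg (not_le.2 (Set.mem_Ioi.1 hx))]
  have hdF : ∀ x ∈ Set.Ioi (0:ℝ), HasDerivAt F (f' x) x := by
    intro x hx
    apply (hd x hx).congr_of_eventuallyEq
    filter_upwards [Ioi_mem_nhds (Set.mem_Ioi.1 hx)] with y hy
    exact hFf y hy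
  have hcont : ContinuousWithinAt F (Set.Ici (0:ℝ)) 0 := by
    rw [← continuousWithinAt_Ioi_iff_Ici]
    have hF0 : F 0 = l := by simp [hF]
    unfold ContinuousWithinAt
    rw [hF0]
    apply h0.congr'
    filter_upwards [self_mem_nhdsWithin] with y hy
    exact (hFf y hy).symm
  have hFT : Tendsto F atTop (𝓝 L) := by
    apply hT.congr'
    filter_upwards [Ioi_mem_atTop (0:ℝ)] with x hx
    exact (hFf x hx).symm
  have := integral_Ioi_of_hasDerivAt_of_tendsto hcont hdF hi hFT
  rw [this]
  simp [hF]

lemma exp_decay_tendsto {c : ℝ} (hc : 0 < c) :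
    Tendsto (fun u : ℝ => Real.exp (-c * u)) atTop (𝓝 0) := by
  apply Real.tendsto_exp_atBot.comp
  apply Tendsto.const_mul_atTop_of_neg (neg_neg_iff_pos.2 hc) tendsto_id

lemma sinh_exp_limT {t : ℝ} (ht : 0 < t) :
    Tendsto (fun u => Real.sinh u * Real.exp (-t * Real.cosh u)) atTop (𝓝 0) := by
  apply tendsto_of_tendsto_of_tendsto_of_le_of_le' (g := fun _ => (0:ℝ))
      (h := fun u => Real.exp (2*((1:ℝ)+1)^2/(t/2)) * Real.exp (-u))
      tendsto_const_nhds
  · have h := (exp_decay_tendsto one_pos).const_mul (Real.exp (2*((1:ℝ)+1)^2/(t/2)))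
    simp only [neg_one_mul, mul_zero] at h
    simpa using h
  · filter_upwards [Ici_mem_atTop (0:ℝ)] with u hu
    have hs : 0 ≤ Real.sinh u := by
      rw [Real.sinh_eq]
      have := Real.exp_le_exp.2 (neg_le_self hu)
      linarith
    exact mul_nonneg hs (Real.exp_pos _).le
  · filter_upwards [Ici_mem_atTop (0:ℝ)] with u hu
    have h1 : Real.sinh u * Real.exp (-t * Real.cosh u)
        ≤ Real.cosh u ^ 1 * Real.exp (-t * Real.cosh u) := by
      apply mul_le_mul_of_nonneg_right _ (Real.exp_pos _).le
      rw [pow_one]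
      have := Real.cosh_sub_sinh u
      have := Real.exp_pos (-u)
      linarith
    refine le_trans h1 (le_trans (cosh_pow_exp_le ht 1 hu) ?_)
    have := pb (1:ℝ) (half_pos ht) hu
    simpa using this

lemma ode {t : ℝ} (ht : 0 < t) : t * Kdd t = Kd t + t * K0 t := by
  have key : ∫ u in Set.Ioi (0:ℝ), (Real.cosh u * Real.exp (-t * Real.cosh u)
      - t * (Real.cosh u ^ 2 * Real.exp (-t * Real.cosh u))
      + t * Real.exp (-t * Real.cosh u)) = 0 := by
    have hd : ∀ u ∈ Set.Ioi (0:ℝ), HasDerivAt (fun u => Real.sinh u * Real.exp (-t * Real.cosh u))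
        (Real.cosh u * Real.exp (-t * Real.cosh u)
          - t * (Real.cosh u ^ 2 * Real.exp (-t * Real.cosh u))
          + t * Real.exp (-t * Real.cosh u)) u := by
      intro u _
      have h1 : HasDerivAt (fun u : ℝ => -t * Real.cosh u) (-t * Real.sinh u) u := by
        simpa using (Real.hasDerivAt_cosh u).const_mul (-t)
      have h2 := (Real.hasDerivAt_sinh u).mul h1.exp
      refine h2.congr_deriv (Eq.symm ?_)
      have hc := Real.cosh_sq_sub_sinh_sq u
      linear_combination (-(t * Real.exp (-t * Real.cosh u))) * hc
    have hi : IntegrableOn (fun u => Real.cosh u * Real.exp (-t * Real.cosh u)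
        - t * (Real.cosh u ^ 2 * Real.exp (-t * Real.cosh u))
        + t * Real.exp (-t * Real.cosh u)) (Set.Ioi (0:ℝ)) :=
      (((Kd_int ht).sub ((Kdd_int ht).const_mul t)).add ((K0_int ht).const_mul t))
    have h0 : Tendsto (fun u => Real.sinh u * Real.exp (-t * Real.cosh u)) (𝓝[>] (0:ℝ)) (𝓝 0) := by
      apply tendsto_nhdsWithin_of_tendsto_nhds
      have hc : Continuous (fun u => Real.sinh u * Real.exp (-t * Real.cosh u)) := by continuity
      have := hc.tendsto 0
      simpa using this
    have := ftc0 hd hi h0 (sinh_exp_limT ht)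
    simpa using this
  have e1 : ∫ u in Set.Ioi (0:ℝ), (Real.cosh u * Real.exp (-t * Real.cosh u)
      - t * (Real.cosh u ^ 2 * Real.exp (-t * Real.cosh u))
      + t * Real.exp (-t * Real.cosh u)) = Kd t - t * Kdd t + t * K0 t := by
    have h1 : Integrable (fun u => Real.cosh u * Real.exp (-t * Real.cosh u)
        - t * (Real.cosh u ^ 2 * Real.exp (-t * Real.cosh u))) (volume.restrict (Set.Ioi (0:ℝ))) :=
      (Kd_int ht).sub ((Kdd_int ht).const_mul t)
    rw [integral_add h1 ((K0_int ht).const_mul t),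
      integral_sub (Kd_int ht) ((Kdd_int ht).const_mul t), MeasureTheory.integral_const_mul, MeasureTheory.integral_const_mul]
    rw [K0, Kd, Kdd]
  rw [e1] at key
  linarith

lemma q_hasDeriv {t : ℝ} (ht : 0 < t) :
    HasDerivAt (fun s => s * Kd s) (-(t * K0 t)) t := by
  have h := (hasDerivAt_id t).mul (Kd_hasDeriv ht)
  have he : 1 * Kd t + id t * -Kdd t = -(t * K0 t) := by
    have := ode ht
    simp only [id]
    linarith
  rw [he] at h
  exact h

lemma exp_sinh_int1 {t : ℝ} (ht : 0 < t) :
    IntegrableOn (fun u => t * (Real.cosh u * Real.exp (-t * Real.sinh u))) (Set.Ioi (0:ℝ)) := by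
  have := (sinh_int ht 1).const_mul t
  simp only [pow_one] at this
  exact this

lemma sinh_tendsto_exp {t : ℝ} (ht : 0 < t) :
    Tendsto (fun u => Real.exp (-t * Real.sinh u)) atTop (𝓝 0) := by
  apply Real.tendsto_exp_atBot.comp
  apply Tendsto.const_mul_atTop_of_neg (neg_neg_iff_pos.2 ht)
  have hb : Tendsto (fun u : ℝ => (Real.exp u - 1)/2) atTop atTop := by
    apply Tendsto.atTop_div_const (by norm_num)
    exact (tendsto_atTop_add_const_right atTop (-1) Real.tendsto_exp_atTop).congr (by intro x; ring)
  apply tendsto_atTop_mono' atTop _ hb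
  filter_upwards [Ici_mem_atTop (0:ℝ)] with u hu using sinh_ge hu

lemma int_one {t : ℝ} (ht : 0 < t) :
    ∫ u in Set.Ioi (0:ℝ), t * (Real.cosh u * Real.exp (-t * Real.sinh u)) = 1 := by
  have hd : ∀ u ∈ Set.Ioi (0:ℝ), HasDerivAt (fun u => -Real.exp (-t * Real.sinh u))
      (t * (Real.cosh u * Real.exp (-t * Real.sinh u))) u := by
    intro u _
    have h1 : HasDerivAt (fun u : ℝ => -t * Real.sinh u) (-t * Real.cosh u) u := by
      simpa using (Real.hasDerivAt_sinh u).const_mul (-t)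
    have h2 := h1.exp.neg
    refine h2.congr_deriv (Eq.symm ?_)
    ring
  have h0 : Tendsto (fun u => -Real.exp (-t * Real.sinh u)) (𝓝[>] (0:ℝ)) (𝓝 (-1)) := by
    apply tendsto_nhdsWithin_of_tendsto_nhds
    have hc : Continuous (fun u => -Real.exp (-t * Real.sinh u)) := by continuity
    have := hc.tendsto 0
    simpa using this
  have hT : Tendsto (fun u => -Real.exp (-t * Real.sinh u)) atTop (𝓝 0) := by
    have := (sinh_tendsto_exp ht).neg
    simpa using this
  have := ftc0 hd (exp_sinh_int1 ht) h0 hT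
  simpa using this

lemma half_exp_int {t : ℝ} (ht : 0 < t) :
    IntegrableOn (fun u => t/2 * Real.exp (-(t/2) * u)) (Set.Ioi (0:ℝ)) :=
  (exp_neg_integrableOn_Ioi 0 (half_pos ht)).const_mul _

lemma int_half {t : ℝ} (ht : 0 < t) :
    ∫ u in Set.Ioi (0:ℝ), t/2 * Real.exp (-(t/2) * u) = 1 := by
  have hd : ∀ u ∈ Set.Ioi (0:ℝ), HasDerivAt (fun u => -Real.exp (-(t/2) * u))
      (t/2 * Real.exp (-(t/2) * u)) u := by
    intro u _
    have h1 : HasDerivAt (fun u : ℝ => -(t/2) * u) (-(t/2)) u := by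
      simpa using (hasDerivAt_id u).const_mul (-(t/2))
    have h2 := h1.exp.neg
    refine h2.congr_deriv (Eq.symm ?_)
    ring
  have h0 : Tendsto (fun u => -Real.exp (-(t/2) * u)) (𝓝[>] (0:ℝ)) (𝓝 (-1)) := by
    apply tendsto_nhdsWithin_of_tendsto_nhds
    have hc : Continuous (fun u => -Real.exp (-(t/2) * u)) := by continuity
    have := hc.tendsto 0
    simpa using this
  have hT : Tendsto (fun u => -Real.exp (-(t/2) * u)) atTop (𝓝 0) := by
    have := (exp_decay_tendsto (half_pos ht)).neg
    simpa using this
  have := ftc0 hd (half_exp_int ht) h0 hT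
  simpa using this

lemma tKd_le_one {t : ℝ} (ht : 0 < t) : t * Kd t ≤ 1 := by
  rw [← int_one ht, Kd, ← MeasureTheory.integral_const_mul]
  apply setIntegral_mono_on ((Kd_int ht).const_mul t) (exp_sinh_int1 ht) measurableSet_Ioi
  intro u hu
  have h1 : Real.exp (-t * Real.cosh u) ≤ Real.exp (-t * Real.sinh u) := by
    apply Real.exp_le_exp.2
    have h := Real.cosh_sub_sinh u
    have := Real.exp_pos (-u)
    nlinarith
  have hc : (0:ℝ) < Real.cosh u := lt_of_lt_of_le one_pos (Real.one_le_cosh u)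
  exact mul_le_mul_of_nonneg_left (mul_le_mul_of_nonneg_left h1 hc.le) ht.le

lemma tKd_ge {t : ℝ} (ht : 0 < t) : 1 - 2*t ≤ t * Kd t := by
  have key : (∫ u in Set.Ioi (0:ℝ), t * (Real.cosh u * Real.exp (-t * Real.sinh u)))
      - (∫ u in Set.Ioi (0:ℝ), t * (Real.cosh u * Real.exp (-t * Real.cosh u))) ≤ 2*t := by
    rw [← integral_sub (exp_sinh_int1 ht) ((Kd_int ht).const_mul t)]
    have h2t : (2:ℝ)*t = ∫ u in Set.Ioi (0:ℝ), 2*t * (t/2 * Real.exp (-(t/2) * u)) := by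
      rw [MeasureTheory.integral_const_mul, int_half ht, mul_one]
    rw [h2t]
    apply setIntegral_mono_on
      ((exp_sinh_int1 ht).sub ((Kd_int ht).const_mul t))
      ((half_exp_int ht).const_mul _) measurableSet_Ioi
    intro u hu
    simp only [Pi.sub_apply]
    have hu0 : (0:ℝ) < u := hu
    have hc : (0:ℝ) < Real.cosh u := lt_of_lt_of_le one_pos (Real.one_le_cosh u)
    have hEs := Real.exp_pos (-t * Real.sinh u)
    -- exp(-t cosh u) ≥ exp(-t sinh u) * (1 - t * exp (-u))
    have hsplit : Real.exp (-t * Real.cosh u)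
        = Real.exp (-t * Real.sinh u) * Real.exp (-(t * Real.exp (-u))) := by
      rw [← Real.exp_add]
      congr 1
      have := Real.cosh_sub_sinh u
      nlinarith [this]
    have hx : 1 - t * Real.exp (-u) ≤ Real.exp (-(t * Real.exp (-u))) := by
      linarith [Real.add_one_le_exp (-(t * Real.exp (-u)))]
    have h1 : Real.exp (-t * Real.sinh u) - Real.exp (-t * Real.cosh u)
        ≤ t * Real.exp (-u) * Real.exp (-t * Real.sinh u) := by
      rw [hsplit]
      nlinarith
    -- cosh u * exp (-u) ≤ 1
    have h2 : Real.cosh u * Real.exp (-u) ≤ 1 := by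
      rw [Real.cosh_eq]
      have e1 : Real.exp u * Real.exp (-u) = 1 := by
        rw [← Real.exp_add]; simp
      have he : Real.exp (-u) ≤ 1 := by
        rw [Real.exp_le_one_iff]
        linarith
      have e2 : Real.exp (-u) * Real.exp (-u) ≤ 1 :=
        mul_le_one₀ he (Real.exp_pos _).le he
      nlinarith
    -- exp (-t sinh u) ≤ exp (-(t/2) u)
    have h3 : Real.exp (-t * Real.sinh u) ≤ Real.exp (-(t/2) * u) := by
      apply Real.exp_le_exp.2
      have hs : u/2 ≤ Real.sinh u := by
        have h4 := sinh_ge hu0.le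
        have h5 := Real.add_one_le_exp u
        linarith
      nlinarith
    have step : t * (Real.cosh u * Real.exp (-t * Real.sinh u))
        - t * (Real.cosh u * Real.exp (-t * Real.cosh u))
        ≤ t^2 * (Real.cosh u * Real.exp (-u)) * Real.exp (-t * Real.sinh u) := by
      nlinarith [mul_le_mul_of_nonneg_left h1 (mul_pos ht hc).le]
    have step2 : t^2 * (Real.cosh u * Real.exp (-u)) * Real.exp (-t * Real.sinh u)
        ≤ t^2 * Real.exp (-(t/2) * u) := by
      have hm := mul_le_mul h2 h3 hEs.le zero_le_one
      nlinarith [hm, sq_nonneg t]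
    have : 2*t * (t/2 * Real.exp (-(t/2) * u)) = t^2 * Real.exp (-(t/2) * u) := by ring
    linarith
  rw [int_one ht] at key
  have he : (∫ u in Set.Ioi (0:ℝ), t * (Real.cosh u * Real.exp (-t * Real.cosh u))) = t * Kd t := by
    rw [Kd, MeasureTheory.integral_const_mul]
  linarith [he ▸ key]

lemma tKd_tendsto : Tendsto (fun t => t * Kd t) (𝓝[>] (0:ℝ)) (𝓝 1) := by
  apply tendsto_of_tendsto_of_tendsto_of_le_of_le' (g := fun t => 1 - 2*t) (h := fun _ => (1:ℝ))
  · apply tendsto_nhdsWithin_of_tendsto_nhds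
    have hc : Continuous (fun t : ℝ => 1 - 2*t) := by continuity
    have := hc.tendsto 0
    simpa using this
  · exact tendsto_const_nhds
  · filter_upwards [self_mem_nhdsWithin] with t ht using tKd_ge ht
  · filter_upwards [self_mem_nhdsWithin] with t ht using tKd_le_one ht

lemma K0_decay {t : ℝ} (ht : 1 ≤ t) : K0 t ≤ Real.exp (1 - t) * K0 1 := by
  have ht0 : (0:ℝ) < t := lt_of_lt_of_le one_pos ht
  rw [K0, K0, ← MeasureTheory.integral_const_mul]
  apply setIntegral_mono_on (K0_int ht0) (((K0_int one_pos).const_mul _)) measurableSet_Ioi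
  intro u _
  rw [← Real.exp_add]
  apply Real.exp_le_exp.2
  have := Real.one_le_cosh u
  nlinarith

lemma Kd_decay {t : ℝ} (ht : 1 ≤ t) : Kd t ≤ Real.exp (1 - t) * Kd 1 := by
  have ht0 : (0:ℝ) < t := lt_of_lt_of_le one_pos ht
  rw [Kd, Kd, ← MeasureTheory.integral_const_mul]
  apply setIntegral_mono_on (Kd_int ht0) (((Kd_int one_pos).const_mul _)) measurableSet_Ioi
  intro u _
  have hc : (0:ℝ) < Real.cosh u := lt_of_lt_of_le one_pos (Real.one_le_cosh u)
  have h1 : Real.exp (-t * Real.cosh u) ≤ Real.exp (1-t) * Real.exp (-1 * Real.cosh u) := by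
    rw [← Real.exp_add]
    apply Real.exp_le_exp.2
    nlinarith [Real.one_le_cosh u]
  calc Real.cosh u * Real.exp (-t * Real.cosh u)
      ≤ Real.cosh u * (Real.exp (1-t) * Real.exp (-1 * Real.cosh u)) :=
        mul_le_mul_of_nonneg_left h1 hc.le
    _ = Real.exp (1-t) * (Real.cosh u * Real.exp (-1 * Real.cosh u)) := by ring

lemma Kd_cont {t : ℝ} (ht : 0 < t) : ContinuousAt Kd t := (Kd_hasDeriv ht).continuousAt

lemma K0_log_bound {t : ℝ} (ht : 0 < t) (ht1 : t ≤ 1) : K0 t ≤ K0 1 - Real.log t := by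
  have huIcc : Set.uIcc t 1 = Set.Icc t 1 := Set.uIcc_of_le ht1
  have hd : ∀ x ∈ Set.uIcc t 1, HasDerivAt K0 (-Kd x) x := by
    intro x hx
    rw [huIcc] at hx
    exact K0_hasDeriv (lt_of_lt_of_le ht hx.1)
  have hKdc : ContinuousOn Kd (Set.uIcc t 1) := by
    intro x hx
    rw [huIcc] at hx
    exact (Kd_cont (lt_of_lt_of_le ht hx.1)).continuousWithinAt
  have hinteg : IntervalIntegrable (fun x => -Kd x) volume t 1 :=
    (hKdc.neg).intervalIntegrable
  have hftc := intervalIntegral.integral_eq_sub_of_hasDerivAt hd hinteg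
  have hKd_le : ∀ x ∈ Set.Icc t 1, Kd x ≤ x⁻¹ := by
    intro x hx
    have hx0 : 0 < x := lt_of_lt_of_le ht hx.1
    rw [inv_eq_one_div, le_div_iff₀ hx0]
    have := tKd_le_one hx0
    nlinarith
  have hmono : ∫ y in t..(1:ℝ), Kd y ≤ ∫ y in t..(1:ℝ), y⁻¹ := by
    apply intervalIntegral.integral_mono_on ht1
    · exact (hKdc.mono (by rw [huIcc])).intervalIntegrable
    · apply ContinuousOn.intervalIntegrable
      apply ContinuousOn.inv₀ continuousOn_id
      intro x hx
      rw [huIcc] at hx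
      exact (lt_of_lt_of_le ht hx.1).ne'
    · exact hKd_le
  have hinv : ∫ y in t..(1:ℝ), y⁻¹ = -Real.log t := by
    rw [integral_inv (by rw [huIcc]; intro h; exact absurd h.1 (not_le.2 ht))]
    rw [one_div, Real.log_inv]
  rw [intervalIntegral.integral_neg] at hftc
  linarith [hmono, hinv ▸ hmono]

noncomputable def W (n j : ℕ) (t : ℝ) : ℝ := K0 t ^ (n - j) * (t * Kd t) ^ j

noncomputable def V (n j k : ℕ) : ℝ := ∫ t in Set.Ioi (0:ℝ), W n j t * t ^ (2*k+1)

lemma q_pos {t : ℝ} (ht : 0 < t) : 0 < t * Kd t := mul_pos ht (Kd_pos ht)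

lemma W_pos {n j : ℕ} {t : ℝ} (ht : 0 < t) : 0 < W n j t :=
  mul_pos (pow_pos (K0_pos ht) _) (pow_pos (q_pos ht) _)

lemma Nge {n j : ℕ} (hn : 1 ≤ n) : 1 ≤ (n - j) + j := by omega

lemma base_ge_one {t : ℝ} (ht : 0 < t) (ht1 : t ≤ 1) : 1 ≤ (K0 1 + 1) - Real.log t := by
  have h1 := K0_pos one_pos
  have h2 := Real.log_nonpos ht.le ht1
  linarith

lemma W_le_small {n j : ℕ} {t : ℝ} (ht : 0 < t) (ht1 : t ≤ 1) :
    W n j t ≤ ((K0 1 + 1) - Real.log t) ^ ((n - j) + j) := by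
  have hb := base_ge_one ht ht1
  have hK : K0 t ≤ (K0 1 + 1) - Real.log t := by
    have := K0_log_bound ht ht1
    linarith
  calc W n j t = K0 t ^ (n - j) * (t * Kd t) ^ j := rfl
    _ ≤ ((K0 1 + 1) - Real.log t) ^ (n - j) * 1 := by
        apply mul_le_mul
        · exact pow_le_pow_left₀ (K0_pos ht).le hK _
        · exact pow_le_one₀ (q_pos ht).le (tKd_le_one ht)
        · exact pow_nonneg (q_pos ht).le _
        · positivity
    _ = ((K0 1 + 1) - Real.log t) ^ (n - j) := mul_one _
    _ ≤ ((K0 1 + 1) - Real.log t) ^ ((n - j) + j) :=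
        pow_le_pow_right₀ hb (Nat.le_add_right _ _)

lemma rpow_log_bound (N : ℕ) (hN : 1 ≤ N) {t : ℝ} (ht : 0 < t) (ht1 : t ≤ 1) :
    ((K0 1 + 1) - Real.log t) ^ N ≤ (K0 1 + 1 + 2*N) ^ N * t ^ (-(1/2) : ℝ) := by
  have hNR : (0:ℝ) < N := by exact_mod_cast hN
  set a : ℝ := -(1:ℝ)/(2*N) with ha
  have haneg : a ≤ 0 := by
    rw [ha]
    apply div_nonpos_of_nonpos_of_nonneg <;> [norm_num; positivity]
  set r : ℝ := t ^ a with hr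
  have hr1 : 1 ≤ r := Real.one_le_rpow_of_pos_of_le_one_of_nonpos ht ht1 haneg
  have hr0 : 0 < r := lt_of_lt_of_le one_pos hr1
  have hlogr : Real.log r = a * Real.log t := Real.log_rpow ht a
  have hlog : -Real.log t = 2*N * Real.log r := by
    rw [hlogr, ha]
    field_simp
  have hlogr2 : Real.log r ≤ r := le_trans (Real.log_le_sub_one_of_pos hr0) (by linarith)
  have hK1 := K0_pos one_pos
  have key : (K0 1 + 1) - Real.log t ≤ (K0 1 + 1 + 2*N) * r := by
    have h1 : -Real.log t ≤ 2*N*r := by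
      rw [hlog]
      apply mul_le_mul_of_nonneg_left hlogr2 (by positivity)
    nlinarith
  have hbase : (0:ℝ) ≤ (K0 1 + 1) - Real.log t := by
    linarith [base_ge_one ht ht1]
  calc ((K0 1 + 1) - Real.log t) ^ N ≤ ((K0 1 + 1 + 2*N) * r) ^ N :=
        pow_le_pow_left₀ hbase key N
    _ = (K0 1 + 1 + 2*N) ^ N * r ^ N := mul_pow _ _ _
    _ = (K0 1 + 1 + 2*N) ^ N * t ^ (-(1/2) : ℝ) := by
        congr 1
        rw [hr, ← Real.rpow_natCast (t ^ a) N, ← Real.rpow_mul ht.le]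
        congr 1
        rw [ha]
        field_simp

lemma Wt_small_bound {n j m : ℕ} (hn : 1 ≤ n) (hm : 1 ≤ m) {t : ℝ} (ht : 0 < t) (ht1 : t ≤ 1) :
    W n j t * t ^ m ≤ (K0 1 + 1 + 2*(((n - j) + j : ℕ) : ℝ)) ^ ((n-j)+j) * t ^ ((1:ℝ)/2) := by
  set N := (n - j) + j with hN
  have hN1 : 1 ≤ N := Nge hn
  have h1 : W n j t * t ^ m ≤ ((K0 1 + 1) - Real.log t) ^ N * t ^ m := by
    apply mul_le_mul_of_nonneg_right (W_le_small ht ht1) (by positivity)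
  have h2 : ((K0 1 + 1) - Real.log t) ^ N * t ^ m
      ≤ ((K0 1 + 1 + 2*N) ^ N * t ^ (-(1/2) : ℝ)) * t ^ m := by
    apply mul_le_mul_of_nonneg_right (rpow_log_bound N hN1 ht ht1) (by positivity)
  have h3 : t ^ m ≤ t := by
    calc t ^ m ≤ t ^ 1 := pow_le_pow_of_le_one ht.le ht1 hm
      _ = t := pow_one t
  have h4 : ((K0 1 + 1 + 2*N) ^ N * t ^ (-(1/2) : ℝ)) * t ^ m
      ≤ ((K0 1 + 1 + 2*N) ^ N * t ^ (-(1/2) : ℝ)) * t := by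
    apply mul_le_mul_of_nonneg_left h3
    have hK1 := K0_pos one_pos
    positivity
  have h5 : ((K0 1 + 1 + 2*N) ^ N * t ^ (-(1/2) : ℝ)) * t
      = (K0 1 + 1 + 2*N) ^ N * t ^ ((1:ℝ)/2) := by
    rw [mul_assoc]
    congr 1
    have hone : t ^ (-(1/2) : ℝ) * t = t ^ (-(1/2) : ℝ) * t ^ ((1:ℝ)) := by rw [Real.rpow_one]
    rw [hone, ← Real.rpow_add ht]
    norm_num
  linarith

lemma W_le_large {n j : ℕ} {t : ℝ} (ht : 1 ≤ t) :
    W n j t ≤ ((K0 1 + Kd 1 + 1) * (t * Real.exp (1 - t))) ^ ((n - j) + j) := by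
  have ht0 : (0:ℝ) < t := lt_of_lt_of_le one_pos ht
  have hK1 := K0_pos one_pos
  have hKd1 := Kd_pos one_pos
  set S := K0 1 + Kd 1 + 1 with hS
  have hSpos : (0:ℝ) < S := by positivity
  have hb : (0:ℝ) < S * (t * Real.exp (1 - t)) := by positivity
  have h1 : K0 t ≤ S * (t * Real.exp (1 - t)) := by
    have := K0_decay ht
    have hKle : K0 1 ≤ S := by rw [hS]; linarith
    have hexp := Real.exp_pos (1 - t)
    nlinarith [mul_le_mul_of_nonneg_left hKle hexp.le,
      mul_nonneg (mul_nonneg hSpos.le hexp.le) (sub_nonneg.2 ht)]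
  have h2 : t * Kd t ≤ S * (t * Real.exp (1 - t)) := by
    have hdec := Kd_decay ht
    have hKle : Kd 1 ≤ S := by rw [hS]; linarith
    have hexp := Real.exp_pos (1 - t)
    nlinarith [mul_le_mul_of_nonneg_left hdec ht0.le,
      mul_le_mul_of_nonneg_left (mul_le_mul_of_nonneg_left hKle hexp.le) ht0.le]
  calc W n j t = K0 t ^ (n - j) * (t * Kd t) ^ j := rfl
    _ ≤ (S * (t * Real.exp (1 - t))) ^ (n - j) * (S * (t * Real.exp (1 - t))) ^ j := by
        apply mul_le_mul
        · exact pow_le_pow_left₀ (K0_pos ht0).le h1 _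
        · exact pow_le_pow_left₀ (q_pos ht0).le h2 _
        · exact pow_nonneg (q_pos ht0).le _
        · exact pow_nonneg hb.le _
    _ = (S * (t * Real.exp (1 - t))) ^ ((n - j) + j) := (pow_add _ _ _).symm

lemma Wt_large_bound {n j m : ℕ} (hn : 1 ≤ n) {t : ℝ} (ht : 1 ≤ t) :
    W n j t * t ^ m ≤ ((K0 1 + Kd 1 + 1) ^ ((n-j)+j) * Real.exp ((n-j)+j : ℕ))
      * (t ^ ((n-j)+j+m) * Real.exp (-t)) := by
  have ht0 : (0:ℝ) < t := lt_of_lt_of_le one_pos ht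
  set N := (n - j) + j with hN
  have hN1 : 1 ≤ N := Nge hn
  set S := K0 1 + Kd 1 + 1 with hS
  have hK1 := K0_pos one_pos
  have hKd1 := Kd_pos one_pos
  have hSpos : (0:ℝ) < S := by positivity
  have h1 : W n j t * t ^ m ≤ (S * (t * Real.exp (1 - t))) ^ N * t ^ m :=
    mul_le_mul_of_nonneg_right (W_le_large ht) (by positivity)
  have h2 : (S * (t * Real.exp (1 - t))) ^ N * t ^ m
      = S ^ N * (t ^ (N + m) * (Real.exp (1 - t)) ^ N) := by
    rw [mul_pow, mul_pow, pow_add]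
    ring
  have h3 : (Real.exp (1 - t)) ^ N = Real.exp N * Real.exp (-(N:ℝ)*t) := by
    rw [← Real.exp_nat_mul, ← Real.exp_add]
    congr 1
    ring
  have h4 : Real.exp (-(N:ℝ)*t) ≤ Real.exp (-t) := by
    apply Real.exp_le_exp.2
    have hNR : (1:ℝ) ≤ N := by exact_mod_cast hN1
    nlinarith
  calc W n j t * t ^ m ≤ (S * (t * Real.exp (1 - t))) ^ N * t ^ m := h1
    _ = S ^ N * (t ^ (N + m) * (Real.exp N * Real.exp (-(N:ℝ)*t))) := by rw [h2, h3]
    _ ≤ S ^ N * (t ^ (N + m) * (Real.exp N * Real.exp (-t))) := by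
        apply mul_le_mul_of_nonneg_left _ (by positivity)
        apply mul_le_mul_of_nonneg_left _ (by positivity)
        exact mul_le_mul_of_nonneg_left h4 (Real.exp_pos _).le
    _ = (S ^ N * Real.exp N) * (t ^ (N + m) * Real.exp (-t)) := by ring

lemma poly_exp_int (p : ℕ) :
    IntegrableOn (fun t : ℝ => t ^ p * Real.exp (-t)) (Set.Ioi (1:ℝ)) := by
  have h := Real.GammaIntegral_convergent (s := (p:ℝ)+1) (by positivity)
  have h2 := h.mono_set (Set.Ioi_subset_Ioi zero_le_one)
  apply h2.congr_fun ?_ measurableSet_Ioi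
  intro x hx
  have hx0 : (0:ℝ) < x := lt_of_lt_of_le one_pos (le_of_lt hx)
  simp only
  rw [show ((p:ℝ) + 1 - 1) = (p:ℝ) by ring, Real.rpow_natCast]
  ring

lemma W_contOn {n j m : ℕ} {s : Set ℝ} (hs : s ⊆ Set.Ioi (0:ℝ)) :
    ContinuousOn (fun t => W n j t * t ^ m) s := by
  intro t hts
  have ht : (0:ℝ) < t := hs hts
  apply ContinuousAt.continuousWithinAt
  have hK : ContinuousAt K0 t := (K0_hasDeriv ht).continuousAt
  have hKd : ContinuousAt Kd t := (Kd_hasDeriv ht).continuousAt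
  have : ContinuousAt (fun t => W n j t) t := by
    apply ContinuousAt.mul
    · exact hK.pow _
    · exact (continuousAt_id.mul hKd).pow _
  exact this.mul (continuousAt_id.pow _)

lemma W_int {n j m : ℕ} (hn : 1 ≤ n) (hm : 1 ≤ m) :
    IntegrableOn (fun t => W n j t * t ^ m) (Set.Ioi (0:ℝ)) := by
  have hK1 := K0_pos one_pos
  have hKd1 := Kd_pos one_pos
  set A : ℝ := (K0 1 + 1 + 2*(((n - j) + j : ℕ) : ℝ)) ^ ((n-j)+j) with hA
  set D : ℝ := (K0 1 + Kd 1 + 1) ^ ((n-j)+j) * Real.exp ((n-j)+j : ℕ) with hD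
  have hA0 : (0:ℝ) ≤ A := by
    rw [hA]
    apply pow_nonneg
    have : (0:ℝ) ≤ (((n - j) + j : ℕ) : ℝ) := Nat.cast_nonneg _
    linarith
  rw [← Set.Ioc_union_Ioi_eq_Ioi (zero_le_one (α := ℝ))]
  apply IntegrableOn.union
  · have hconst : IntegrableOn (fun _ : ℝ => A) (Set.Ioc (0:ℝ) 1) :=
      integrableOn_const measure_Ioc_lt_top.ne
    apply Integrable.mono' hconst
    · exact (W_contOn (fun x hx => hx.1)).aestronglyMeasurable measurableSet_Ioc
    · filter_upwards [ae_restrict_mem measurableSet_Ioc] with t htm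
      rw [Real.norm_eq_abs, abs_of_pos (mul_pos (W_pos htm.1) (pow_pos htm.1 m))]
      refine le_trans (Wt_small_bound hn hm htm.1 htm.2) ?_
      have ht12 : t ^ ((1:ℝ)/2) ≤ 1 :=
        Real.rpow_le_one htm.1.le htm.2 (by norm_num)
      calc A * t ^ ((1:ℝ)/2) ≤ A * 1 := mul_le_mul_of_nonneg_left ht12 hA0
        _ = A := mul_one A
  · have hpoly : IntegrableOn (fun t : ℝ => D * (t ^ ((n-j)+j+m) * Real.exp (-t))) (Set.Ioi (1:ℝ)) :=
      (poly_exp_int ((n-j)+j+m)).const_mul D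
    apply Integrable.mono' hpoly
    · exact (W_contOn (s := Set.Ioi 1) (fun x (hx : (1:ℝ) < x) => (lt_trans one_pos hx : (0:ℝ) < x))).aestronglyMeasurable measurableSet_Ioi
    · filter_upwards [ae_restrict_mem measurableSet_Ioi] with t htm
      have ht0 : (0:ℝ) < t := lt_trans one_pos htm
      rw [Real.norm_eq_abs, abs_of_pos (mul_pos (W_pos ht0) (pow_pos ht0 m))]
      exact Wt_large_bound hn (le_of_lt htm)

lemma W_lim0 {n j m : ℕ} (hn : 1 ≤ n) (hm : 1 ≤ m) :
    Tendsto (fun t => W n j t * t ^ m) (𝓝[>] (0:ℝ)) (𝓝 0) := by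
  set A : ℝ := (K0 1 + 1 + 2*(((n - j) + j : ℕ) : ℝ)) ^ ((n-j)+j) with hA
  apply tendsto_of_tendsto_of_tendsto_of_le_of_le' (g := fun _ => (0:ℝ))
      (h := fun t => A * t ^ ((1:ℝ)/2)) tendsto_const_nhds
  · have hrt : Tendsto (fun t : ℝ => t ^ ((1:ℝ)/2)) (𝓝[>] (0:ℝ)) (𝓝 0) := by
      apply tendsto_nhdsWithin_of_tendsto_nhds
      have := (Real.continuousAt_rpow_const 0 ((1:ℝ)/2) (Or.inr (by norm_num))).tendsto
      simpa using this
    have := hrt.const_mul A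
    simpa using this
  · filter_upwards [self_mem_nhdsWithin] with t ht
    exact (mul_pos (W_pos ht) (pow_pos ht m)).le
  · filter_upwards [Ioo_mem_nhdsGT_of_mem (Set.left_mem_Ico.2 one_pos)] with t ht
    exact Wt_small_bound hn hm ht.1 (le_of_lt ht.2)

lemma W_limT {n j m : ℕ} (hn : 1 ≤ n) :
    Tendsto (fun t => W n j t * t ^ m) atTop (𝓝 0) := by
  set D : ℝ := (K0 1 + Kd 1 + 1) ^ ((n-j)+j) * Real.exp ((n-j)+j : ℕ) with hD
  apply tendsto_of_tendsto_of_tendsto_of_le_of_le' (g := fun _ => (0:ℝ))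
      (h := fun t => D * (t ^ ((n-j)+j+m) * Real.exp (-t))) tendsto_const_nhds
  · have hpe : Tendsto (fun t : ℝ => t ^ ((n-j)+j+m) * Real.exp (-t)) atTop (𝓝 0) :=
      tendsto_pow_mul_exp_neg_atTop_nhds_zero _
    have := hpe.const_mul D
    simpa using this
  · filter_upwards [Ioi_mem_atTop (0:ℝ)] with t ht
    exact (mul_pos (W_pos ht) (pow_pos ht m)).le
  · filter_upwards [Ici_mem_atTop (1:ℝ)] with t ht
    exact Wt_large_bound hn ht

lemma Wnn_eq (n : ℕ) (t : ℝ) : W n n t = (t * Kd t) ^ n := by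
  rw [W, Nat.sub_self, pow_zero, one_mul]

lemma Wnn_lim0 (n : ℕ) : Tendsto (fun t => W n n t) (𝓝[>] (0:ℝ)) (𝓝 1) := by
  have h := tKd_tendsto.pow n
  simp only [one_pow] at h
  apply h.congr
  intro t
  rw [Wnn_eq]

lemma Wnn_limT {n : ℕ} (hn : 1 ≤ n) : Tendsto (fun t => W n n t) atTop (𝓝 0) := by
  apply tendsto_of_tendsto_of_tendsto_of_le_of_le' (g := fun _ => (0:ℝ))
      (h := fun t => ((Kd 1 + 1) * (t * Real.exp (1 - t))) ^ n) tendsto_const_nhds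
  · have hin : Tendsto (fun t : ℝ => (Kd 1 + 1) * (t * Real.exp (1 - t))) atTop (𝓝 0) := by
      have h1 : Tendsto (fun t : ℝ => t * Real.exp (-t)) atTop (𝓝 0) := by
        have := tendsto_pow_mul_exp_neg_atTop_nhds_zero 1
        simpa using this
      have h2 : Tendsto (fun t : ℝ => t * Real.exp (1 - t)) atTop (𝓝 0) := by
        have h3 := h1.const_mul (Real.exp 1)
        simp only [mul_zero] at h3
        apply h3.congr
        intro t
        have : Real.exp 1 * Real.exp (-t) = Real.exp (1 - t) := by
          rw [← Real.exp_add]; ring_nf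
        calc Real.exp 1 * (t * Real.exp (-t)) = t * (Real.exp 1 * Real.exp (-t)) := by ring
          _ = t * Real.exp (1 - t) := by rw [this]
      have := h2.const_mul (Kd 1 + 1)
      simpa using this
    have := hin.pow n
    rw [zero_pow (by omega)] at this
    exact this
  · filter_upwards [Ioi_mem_atTop (0:ℝ)] with t ht
    exact (W_pos ht).le
  · filter_upwards [Ici_mem_atTop (1:ℝ)] with t ht
    have ht0 : (0:ℝ) < t := lt_of_lt_of_le one_pos ht
    rw [Wnn_eq]
    apply pow_le_pow_left₀ (q_pos ht0).le
    have hdec := Kd_decay ht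
    have hexp := Real.exp_pos (1 - t)
    have hKd1 := Kd_pos one_pos
    nlinarith [mul_le_mul_of_nonneg_left hdec ht0.le]

lemma W_hasDeriv {n j m : ℕ} (hj : j ≤ n) {t : ℝ} (ht : 0 < t) :
    HasDerivAt (fun s => W n j s * s ^ (m+1))
      ((((m:ℝ)+1) * W n j t - ((n-j : ℕ):ℝ) * W n (j+1) t - (j:ℝ) * t^2 * W n (j-1) t) * t ^ m)
      t := by
  have hp := K0_hasDeriv ht
  have hq := q_hasDeriv ht
  have hW : HasDerivAt (fun s => W n j s)
      ((((n-j : ℕ):ℝ) * K0 t ^ (n-j-1) * (-Kd t)) * (t*Kd t)^j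
        + K0 t^(n-j) * (((j:ℝ) * (t*Kd t)^(j-1) * (-(t*K0 t))))) t :=
    (hp.pow (n-j)).mul (hq.pow j)
  have hprod := hW.mul (hasDerivAt_pow (m+1) t)
  have e1 : ((n-j:ℕ):ℝ) * (K0 t^(n-j-1) * Kd t * (t*Kd t)^j * t^(m+1))
      = ((n-j:ℕ):ℝ) * (K0 t^(n-(j+1)) * (t*Kd t)^(j+1) * t^m) := by
    rw [show n-j-1 = n-(j+1) from by omega, pow_succ (t*Kd t) j, pow_succ t m]
    ring
  have e2 : (j:ℝ) * (K0 t^(n-j) * (t*Kd t)^(j-1) * (t * K0 t) * t^(m+1))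
      = (j:ℝ) * (t^2 * K0 t^(n-(j-1)) * (t*Kd t)^(j-1) * t^m) := by
    rcases Nat.eq_zero_or_pos j with hj0 | hj1
    · subst hj0; simp
    · rw [show n-(j-1) = (n-j)+1 from by omega, pow_succ (K0 t) (n-j), pow_succ t m]
      ring
  refine hprod.congr_deriv (Eq.symm ?_)
  simp only [W, Nat.add_sub_cancel]
  push_cast
  linear_combination e1 + e2

lemma R1 {n : ℕ} (hn : 1 ≤ n) {j : ℕ} (hj : j ≤ n) (k : ℕ) :
    (2*(k:ℝ)+2) * V n j k = ((n-j : ℕ):ℝ) * V n (j+1) k + (j:ℝ) * V n (j-1) (k+1) := by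
  have hm1 : (1:ℕ) ≤ 2*k+1 := by omega
  have hm3 : (1:ℕ) ≤ 2*k+3 := by omega
  set f' : ℝ → ℝ := fun t =>
    (((2*k:ℝ)+1+1) * W n j t - ((n-j:ℕ):ℝ) * W n (j+1) t - (j:ℝ)*t^2* W n (j-1) t) * t^(2*k+1)
    with hf'
  have heq : ∀ t : ℝ, f' t = (2*(k:ℝ)+2) * (W n j t * t^(2*k+1))
      - ((n-j:ℕ):ℝ) * (W n (j+1) t * t^(2*k+1)) - (j:ℝ) * (W n (j-1) t * t^(2*k+3)) := by
    intro t
    rw [hf', show 2*k+3 = 2 + (2*k+1) from by omega, pow_add]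
    ring
  have h1 := (W_int (n:=n) (j:=j) (m:=2*k+1) hn hm1).const_mul (2*(k:ℝ)+2)
  have h2 := (W_int (n:=n) (j:=j+1) (m:=2*k+1) hn hm1).const_mul ((n-j:ℕ):ℝ)
  have h3 := (W_int (n:=n) (j:=j-1) (m:=2*k+3) hn hm3).const_mul (j:ℝ)
  have hfi : IntegrableOn f' (Set.Ioi (0:ℝ)) := by
    have h123 : IntegrableOn (fun t => (2*(k:ℝ)+2) * (W n j t * t^(2*k+1))
        - ((n-j:ℕ):ℝ) * (W n (j+1) t * t^(2*k+1))
        - (j:ℝ) * (W n (j-1) t * t^(2*k+3))) (Set.Ioi (0:ℝ)) := (h1.sub h2).sub h3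
    exact h123.congr_fun (fun t _ => (heq t).symm) measurableSet_Ioi
  have hd : ∀ t ∈ Set.Ioi (0:ℝ), HasDerivAt (fun s => W n j s * s ^ (2*k+1+1)) (f' t) t := by
    intro t htpos
    have h := W_hasDeriv (n:=n) (j:=j) (m:=2*k+1) hj htpos
    refine h.congr_deriv (Eq.symm ?_)
    rw [hf']
    push_cast
    ring
  have h0 : Tendsto (fun s => W n j s * s ^ (2*k+1+1)) (𝓝[>] (0:ℝ)) (𝓝 0) :=
    W_lim0 hn (by omega)
  have hT : Tendsto (fun s => W n j s * s ^ (2*k+1+1)) atTop (𝓝 0) := W_limT hn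
  have hint := ftc0 hd hfi h0 hT
  rw [sub_zero] at hint
  have hsplit : ∫ t in Set.Ioi (0:ℝ), f' t
      = (2*(k:ℝ)+2) * V n j k - ((n-j:ℕ):ℝ) * V n (j+1) k - (j:ℝ) * V n (j-1) (k+1) := by
    have e1 : ∫ t in Set.Ioi (0:ℝ), f' t = ∫ t in Set.Ioi (0:ℝ),
        ((2*(k:ℝ)+2) * (W n j t * t^(2*k+1))
          - ((n-j:ℕ):ℝ) * (W n (j+1) t * t^(2*k+1)) - (j:ℝ) * (W n (j-1) t * t^(2*k+3))) := by
      apply setIntegral_congr_fun measurableSet_Ioi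
      intro t _
      exact heq t
    have h12 : Integrable (fun t => (2*(k:ℝ)+2) * (W n j t * t^(2*k+1))
        - ((n-j:ℕ):ℝ) * (W n (j+1) t * t^(2*k+1))) (volume.restrict (Set.Ioi (0:ℝ))) := h1.sub h2
    rw [e1, integral_sub h12 h3, integral_sub h1 h2,
      MeasureTheory.integral_const_mul, MeasureTheory.integral_const_mul,
      MeasureTheory.integral_const_mul]
    rw [V, V, V]
    norm_num [show 2*(k+1)+1 = 2*k+3 from by omega]
  rw [hsplit] at hint
  linarith

lemma R3 {n : ℕ} (hn : 1 ≤ n) : (n:ℝ) * V n (n-1) 0 = 1 := by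
  set f' : ℝ → ℝ := fun t => -(n:ℝ) * (W n (n-1) t * t^1) with hf'
  have hd : ∀ t ∈ Set.Ioi (0:ℝ), HasDerivAt (fun s => W n n s) (f' t) t := by
    intro t htpos
    have hq := q_hasDeriv htpos
    have h2 : HasDerivAt (fun s => (s * Kd s)^n)
        ((n:ℝ) * (t*Kd t)^(n-1) * (-(t*K0 t))) t := hq.pow n
    have h3 : (fun s => W n n s) = fun s => (s * Kd s)^n := by
      funext s; exact Wnn_eq n s
    rw [h3]
    refine h2.congr_deriv (Eq.symm ?_)
    rw [hf']
    simp only [W]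
    rw [show n-(n-1) = 1 from by omega, pow_one]
    ring
  have hfi : IntegrableOn f' (Set.Ioi (0:ℝ)) :=
    (W_int (n:=n) (j:=n-1) (m:=1) hn le_rfl).const_mul (-(n:ℝ))
  have hint := ftc0 hd hfi (Wnn_lim0 n) (Wnn_limT hn)
  have hval : ∫ t in Set.Ioi (0:ℝ), f' t = -(n:ℝ) * V n (n-1) 0 := by
    rw [hf', MeasureTheory.integral_const_mul, V]
  rw [hval] at hint
  linarith

noncomputable def aa (n : ℕ) : ℕ → ℕ → ℕ → ℚ
  | 0, i, _ => if i = 0 then 1 else 0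
  | 1, i, k => if i = 0 then (2*(k:ℚ)+2)/(n:ℚ) else 0
  | (j+2), i, k => ((2*(k:ℚ)+2) * aa n (j+1) i k
      - ((j:ℚ)+1) * (if i = 0 then 0 else aa n j (i-1) (k+1))) / ((n:ℚ) - ((j:ℚ)+1))

lemma aa_zero (n : ℕ) : ∀ j i k, j/2 < i → aa n j i k = 0 := by
  intro j
  induction j using Nat.strong_induction_on with
  | _ j ih =>
    match j with
    | 0 => intro i k h; rw [aa, if_neg (by omega)]
    | 1 => intro i k h; rw [aa, if_neg (by omega)]
    | (j+2) =>
      intro i k h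
      rw [aa]
      have h1 : aa n (j+1) i k = 0 := ih (j+1) (by omega) i k (by omega)
      have h2 : (if i = 0 then (0:ℚ) else aa n j (i-1) (k+1)) = 0 := by
        rcases Nat.eq_zero_or_pos i with h0 | h0
        · simp [h0]
        · rw [if_neg (by omega)]
          exact ih j (by omega) (i-1) (k+1) (by omega)
      rw [h1, h2]
      simp

lemma aa_sign (n : ℕ) : ∀ j, j ≤ n → ∀ i k, i ≤ j/2 → 0 < (-1:ℚ)^i * aa n j i k := by
  intro j
  induction j using Nat.strong_induction_on with
  | _ j ih =>
    match j with
    | 0 =>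
      intro _ i k hi
      have : i = 0 := by omega
      subst this
      simp [aa]
    | 1 =>
      intro hjn i k hi
      have : i = 0 := by omega
      subst this
      have hn1 : (0:ℚ) < (n:ℚ) := by exact_mod_cast Nat.lt_of_lt_of_le one_pos hjn
      simp only [aa, if_pos rfl, pow_zero, one_mul]
      apply div_pos (by positivity) hn1
    | (j+2) =>
      intro hjn i k hi
      have hd : (0:ℚ) < (n:ℚ) - ((j:ℚ)+1) := by
        have : (j:ℚ)+1 < (n:ℚ) := by exact_mod_cast (by omega : j+1 < n)
        linarith
      rw [aa]
      rcases Nat.eq_zero_or_pos i with h0 | h0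
      · subst h0
        norm_num
        apply div_pos _ hd
        have h1 := ih (j+1) (by omega) (by omega : j+1 ≤ n) 0 k (by omega)
        simp only [pow_zero, one_mul] at h1
        exact mul_pos (by positivity) h1
      · obtain ⟨i', rfl⟩ : ∃ i', i = i'+1 := ⟨i-1, by omega⟩
        rw [if_neg (by omega)]
        have h2 : 0 < (-1:ℚ)^i' * aa n j i' (k+1) :=
          ih j (by omega) (by omega : j ≤ n) i' (k+1) (by omega)
        have h1 : 0 ≤ (-1:ℚ)^(i'+1) * aa n (j+1) (i'+1) k := by
          rcases le_or_gt (i'+1) ((j+1)/2) with hle | hgt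
          · exact (ih (j+1) (by omega) (by omega : j+1 ≤ n) (i'+1) k hle).le
          · rw [aa_zero n (j+1) (i'+1) k hgt, mul_zero]
        rw [mul_div_assoc']
        apply div_pos _ hd
        have hexp : (-1:ℚ)^(i'+1) = -(-1:ℚ)^i' := by rw [pow_succ]; ring
        have expand : (-1:ℚ)^(i'+1) * ((2*(k:ℚ)+2) * aa n (j+1) (i'+1) k
            - ((j:ℚ)+1) * aa n j (i'+1-1) (k+1))
            = (2*(k:ℚ)+2) * ((-1:ℚ)^(i'+1) * aa n (j+1) (i'+1) k)
              + ((j:ℚ)+1) * ((-1:ℚ)^i' * aa n j i' (k+1)) := by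
          rw [show i'+1-1 = i' from rfl, hexp]
          ring
        rw [expand]
        have hk2 : (0:ℚ) < 2*(k:ℚ)+2 := by positivity
        have hj1 : (0:ℚ) < (j:ℚ)+1 := by positivity
        nlinarith

lemma VC1 (n : ℕ) (hn : 1 ≤ n) : ∀ j, j ≤ n → ∀ k,
    V n j k = ∑ i ∈ Finset.range (j/2+1), ((aa n j i k : ℚ) : ℝ) * V n 0 (k+i) := by
  intro j
  induction j using Nat.strong_induction_on with
  | _ j ih =>
    match j with
    | 0 =>
      intro _ k
      simp [aa]
    | 1 =>
      intro hjn k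
      have hR := R1 hn (j:=0) (by omega) k
      simp only [Nat.sub_zero, Nat.cast_zero, zero_mul, add_zero] at hR
      have hnR : ((n:ℝ)) ≠ 0 := by positivity
      have : V n 1 k = (2*(k:ℝ)+2)/(n:ℝ) * V n 0 k := by
        field_simp
        linarith [hR]
      rw [this]
      simp only [Nat.div_self, Finset.sum_range_one, aa]
      norm_num
    | (j+2) =>
      intro hjn k
      have hj1n : j+1 ≤ n := by omega
      have hcast : ((n - (j+1) : ℕ) : ℝ) = (n:ℝ) - ((j:ℝ)+1) := by
        rw [Nat.cast_sub hj1n]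
        push_cast
        ring
      have hdpos : (0:ℝ) < (n:ℝ) - ((j:ℝ)+1) := by
        have : (j:ℝ)+1 < (n:ℝ) := by exact_mod_cast (by omega : j+1 < n)
        linarith
      have hdQ : ((n:ℚ) - ((j:ℚ)+1)) ≠ 0 := by
        have : (j:ℚ)+1 < (n:ℚ) := by exact_mod_cast (by omega : j+1 < n)
        linarith
      have hR := R1 hn (j:=j+1) hj1n k
      rw [hcast] at hR
      simp only [Nat.add_sub_cancel] at hR
      rw [show j+1+1 = j+2 from rfl] at hR
      push_cast at hR
      -- hR : (2k+2) V(j+1) k = (n-(j+1)) * V (j+2) k + (j+1) * V j (k+1)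
      have hIH1 := ih (j+1) (by omega) hj1n k
      have hIH0 := ih j (by omega) (by omega) (k+1)
      -- extend IH1 sum to range (j/2+2)
      have hS1 : ∑ i ∈ Finset.range (j/2+2), ((aa n (j+1) i k : ℚ) : ℝ) * V n 0 (k+i)
          = V n (j+1) k := by
        rw [hIH1]
        symm
        apply Finset.sum_subset
        · apply Finset.range_subset_range.2
          omega
        · intro i _ hnotin
          rw [Finset.mem_range, not_lt] at hnotin
          rw [aa_zero n (j+1) i k (by omega)]
          simp
      set b : ℕ → ℚ := fun i => if i = 0 then 0 else aa n j (i-1) (k+1) with hb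
      have hS2 : ∑ i ∈ Finset.range (j/2+2), ((b i : ℚ) : ℝ) * V n 0 (k+i)
          = V n j (k+1) := by
        rw [Finset.sum_range_succ' (fun i => ((b i : ℚ) : ℝ) * V n 0 (k+i)) (j/2+1)]
        have hb0 : b 0 = 0 := by simp [hb]
        have hbi : ∀ i : ℕ, b (i+1) = aa n j i (k+1) := by
          intro i
          rw [hb]
          simp
        rw [hb0]
        simp only [hbi, Rat.cast_zero, zero_mul, add_zero]
        rw [hIH0]
        apply Finset.sum_congr rfl
        intro i _
        rw [show k+(i+1) = k+1+i from by omega]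
      have hQcast : ∀ i, (((n:ℝ) - ((j:ℝ)+1))) * ((aa n (j+2) i k : ℚ) : ℝ)
          = (2*(k:ℝ)+2) * ((aa n (j+1) i k : ℚ) : ℝ) - ((j:ℝ)+1) * ((b i : ℚ) : ℝ) := by
        intro i
        have hQ : ((n:ℚ) - ((j:ℚ)+1)) * aa n (j+2) i k
            = (2*(k:ℚ)+2) * aa n (j+1) i k - ((j:ℚ)+1) * b i := by
          rw [aa, hb, mul_comm, div_mul_cancel₀ _ hdQ]
        exact_mod_cast congrArg (fun q : ℚ => (q : ℝ)) hQ
      have key : ((n:ℝ) - ((j:ℝ)+1)) * (∑ i ∈ Finset.range ((j+2)/2+1),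
            ((aa n (j+2) i k : ℚ) : ℝ) * V n 0 (k+i))
          = (2*(k:ℝ)+2) * V n (j+1) k - ((j:ℝ)+1) * V n j (k+1) := by
        rw [show (j+2)/2+1 = j/2+2 from by omega, Finset.mul_sum]
        have hterm : ∀ i ∈ Finset.range (j/2+2),
            ((n:ℝ) - ((j:ℝ)+1)) * (((aa n (j+2) i k : ℚ) : ℝ) * V n 0 (k+i))
            = (2*(k:ℝ)+2) * (((aa n (j+1) i k : ℚ) : ℝ) * V n 0 (k+i))
              - ((j:ℝ)+1) * (((b i : ℚ) : ℝ) * V n 0 (k+i)) := by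
          intro i _
          have := hQcast i
          linear_combination (V n 0 (k+i)) * this
        rw [Finset.sum_congr rfl hterm, Finset.sum_sub_distrib, ← Finset.mul_sum, ← Finset.mul_sum,
          hS1, hS2]
      have hfin : ((n:ℝ) - ((j:ℝ)+1)) * V n (j+2) k
          = ((n:ℝ) - ((j:ℝ)+1)) * (∑ i ∈ Finset.range ((j+2)/2+1),
            ((aa n (j+2) i k : ℚ) : ℝ) * V n 0 (k+i)) := by
        rw [key]
        linear_combination -hR
      exact mul_left_cancel₀ hdpos.ne' hfin

lemma main_rec (n : ℕ) (hn : 2 ≤ n) (k : ℕ) :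
    ∃ c : ℕ → ℚ, c ((n+1)/2) ≠ 0 ∧
      ∑ i ∈ Finset.range ((n+1)/2 + 1), ((c i : ℚ) : ℝ) * V n 0 (k+i) = 0 := by
  have hn1 : 1 ≤ n := by omega
  set m := (n+1)/2 with hm
  set bb : ℕ → ℚ := fun i => if i = 0 then 0 else aa n (n-1) (i-1) (k+1) with hbb
  set c : ℕ → ℚ := fun i => (2*(k:ℚ)+2) * aa n n i k - (n:ℚ) * bb i with hc
  refine ⟨c, ?_, ?_⟩
  · obtain ⟨m', hm'⟩ : ∃ m', m = m'+1 := ⟨m-1, by omega⟩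
    have hB : 0 < (-1:ℚ)^m' * aa n (n-1) m' (k+1) :=
      aa_sign n (n-1) (by omega) m' (k+1) (by omega)
    have hA : 0 ≤ (-1:ℚ)^(m'+1) * aa n n (m'+1) k := by
      rcases le_or_gt (m'+1) (n/2) with hle | hgt
      · exact (aa_sign n n le_rfl (m'+1) k hle).le
      · rw [aa_zero n n (m'+1) k hgt, mul_zero]
    have hcm : c (m'+1) = (2*(k:ℚ)+2) * aa n n (m'+1) k - (n:ℚ) * aa n (n-1) m' (k+1) := by
      rw [hc]
      simp only [hbb]
      rw [if_neg (Nat.succ_ne_zero m'), Nat.add_sub_cancel]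
    have hpos : 0 < (-1:ℚ)^(m'+1) * c (m'+1) := by
      rw [hcm]
      have hexpand : (-1:ℚ)^(m'+1) * ((2*(k:ℚ)+2) * aa n n (m'+1) k
          - (n:ℚ) * aa n (n-1) m' (k+1))
          = (2*(k:ℚ)+2) * ((-1:ℚ)^(m'+1) * aa n n (m'+1) k)
            + (n:ℚ) * ((-1:ℚ)^m' * aa n (n-1) m' (k+1)) := by
        rw [pow_succ]
        ring
      rw [hexpand]
      have hnQ : (0:ℚ) < (n:ℚ) := by exact_mod_cast (by omega : 0 < n)
      have h1 : (0:ℚ) ≤ (2*(k:ℚ)+2) * ((-1:ℚ)^(m'+1) * aa n n (m'+1) k) :=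
        mul_nonneg (by positivity) hA
      have h2 : (0:ℚ) < (n:ℚ) * ((-1:ℚ)^m' * aa n (n-1) m' (k+1)) :=
        mul_pos hnQ hB
      linarith
    rw [hm']
    intro h0
    rw [h0, mul_zero] at hpos
    exact lt_irrefl 0 hpos
  · have hR := R1 hn1 (j:=n) le_rfl k
    simp only [Nat.sub_self, Nat.cast_zero, zero_mul, zero_add] at hR
    have hV1 := VC1 n hn1 n le_rfl k
    have hV2 := VC1 n hn1 (n-1) (by omega) (k+1)
    have hS1 : ∑ i ∈ Finset.range (m+1), ((aa n n i k : ℚ) : ℝ) * V n 0 (k+i)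
        = V n n k := by
      rw [hV1]
      symm
      apply Finset.sum_subset
      · apply Finset.range_subset_range.2
        omega
      · intro i _ hnotin
        rw [Finset.mem_range, not_lt] at hnotin
        rw [aa_zero n n i k (by omega)]
        simp
    have hS2 : ∑ i ∈ Finset.range (m+1), ((bb i : ℚ) : ℝ) * V n 0 (k+i)
        = V n (n-1) (k+1) := by
      rw [show m+1 = m+1 from rfl, Finset.sum_range_succ'
        (fun i => ((bb i : ℚ) : ℝ) * V n 0 (k+i)) m]
      have hb0 : bb 0 = 0 := by simp [hbb]
      have hbi : ∀ i : ℕ, bb (i+1) = aa n (n-1) i (k+1) := by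
        intro i
        simp [hbb]
      rw [hb0]
      simp only [hbi, Rat.cast_zero, zero_mul, add_zero]
      rw [hV2, show (n-1)/2+1 = m from by omega]
      apply Finset.sum_congr rfl
      intro i _
      rw [show k+(i+1) = k+1+i from by omega]
    have hsplit : ∑ i ∈ Finset.range (m + 1), ((c i : ℚ) : ℝ) * V n 0 (k+i)
        = (2*(k:ℝ)+2) * (∑ i ∈ Finset.range (m+1), ((aa n n i k : ℚ) : ℝ) * V n 0 (k+i))
          - (n:ℝ) * (∑ i ∈ Finset.range (m+1), ((bb i : ℚ) : ℝ) * V n 0 (k+i)) := by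
      rw [Finset.mul_sum, Finset.mul_sum, ← Finset.sum_sub_distrib]
      apply Finset.sum_congr rfl
      intro i _
      have : ((c i : ℚ) : ℝ) = (2*(k:ℝ)+2) * ((aa n n i k : ℚ) : ℝ) - (n:ℝ) * ((bb i : ℚ) : ℝ) := by
        rw [hc]
        push_cast
        ring
      rw [this]
      ring
    rw [hsplit, hS1, hS2]
    linarith [hR]

lemma mem_span_M (n : ℕ) (hn : 2 ≤ n) : ∀ r : ℕ, V n 0 r ∈ Submodule.span ℚ
    (Set.range (fun i : Fin ((n+1)/2) => V n 0 (i : ℕ))) := by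
  intro r
  induction r using Nat.strong_induction_on with
  | _ r ih =>
    set m := (n+1)/2 with hm
    have hm1 : 1 ≤ m := by omega
    rcases lt_or_ge r m with hr | hr
    · apply Submodule.subset_span
      exact ⟨⟨r, hr⟩, rfl⟩
    · set k := r - m with hk
      have hrk : r = k + m := by omega
      obtain ⟨c, hcm, hsum⟩ := main_rec n hn k
      rw [Finset.sum_range_succ] at hsum
      have hcmR : ((c m : ℚ) : ℝ) ≠ 0 := by simpa using hcm
      have hMr : V n 0 r = ∑ i ∈ Finset.range m, ((-(c i)/(c m) : ℚ) : ℝ) * V n 0 (k+i) := by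
        rw [← hrk] at hsum
        apply mul_left_cancel₀ hcmR
        rw [Finset.mul_sum]
        have hterm : ∀ i ∈ Finset.range m,
            ((c m : ℚ) : ℝ) * (((-(c i)/(c m) : ℚ) : ℝ) * V n 0 (k+i))
            = -(((c i : ℚ) : ℝ) * V n 0 (k+i)) := by
          intro i _
          have hcast : ((-(c i)/(c m) : ℚ) : ℝ) = -((c i : ℚ) : ℝ)/((c m : ℚ) : ℝ) := by
            push_cast
            ring
          rw [hcast]
          field_simp
        rw [Finset.sum_congr rfl hterm]
        rw [Finset.sum_neg_distrib]
        linarith [hsum]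
      rw [hMr]
      apply Submodule.sum_mem
      intro i hi
      rw [Finset.mem_range] at hi
      have hmem := ih (k+i) (by omega)
      have : ((-(c i)/(c m) : ℚ) : ℝ) * V n 0 (k+i)
          = (-(c i)/(c m) : ℚ) • V n 0 (k+i) := by
        rw [Rat.smul_def]
      rw [this]
      exact Submodule.smul_mem _ _ hmem

theorem stmt8' (n : ℕ) (hn : 2 ≤ n) :
    Module.rank ℚ
      ↥(Submodule.span ℚ
        {x : ℝ | ∃ k : ℕ, x = ∫ t in Set.Ioi (0:ℝ), (K0 t)^n * t^(2 * k + 1)})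
      ≤ ((n + 1) / 2 : ℕ) ∧
    ∃ (c : ℚ) (g : ℕ → ℚ),
      (c ≠ 0 ∨ ∃ k ∈ Finset.range ((n - 1) / 2 + 1), g k ≠ 0) ∧
      (c : ℝ) + ∑ k ∈ Finset.range ((n - 1) / 2 + 1),
        (g k : ℝ) * ∫ t in Set.Ioi (0:ℝ), (K0 t)^n * t^(2 * k + 1) = 0 := by
  have hn1 : 1 ≤ n := by omega
  have hM : ∀ k : ℕ, (∫ t in Set.Ioi (0:ℝ), (K0 t)^n * t^(2 * k + 1)) = V n 0 k := by
    intro k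
    rw [V]
    apply setIntegral_congr_fun measurableSet_Ioi
    intro t _
    simp [W]
  constructor
  · set T : Set ℝ := Set.range (fun i : Fin ((n+1)/2) => V n 0 (i:ℕ)) with hT
    have hsub : {x : ℝ | ∃ k : ℕ, x = ∫ t in Set.Ioi (0:ℝ), (K0 t)^n * t^(2 * k + 1)}
        ⊆ (Submodule.span ℚ T : Submodule ℚ ℝ) := by
      rintro x ⟨k, rfl⟩
      rw [hM k]
      exact mem_span_M n hn k
    have hle : Submodule.span ℚ
        {x : ℝ | ∃ k : ℕ, x = ∫ t in Set.Ioi (0:ℝ), (K0 t)^n * t^(2 * k + 1)}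
        ≤ Submodule.span ℚ T := Submodule.span_le.2 hsub
    have h1 := Submodule.rank_mono (R := ℚ) hle
    have h2 := rank_span_le (R := ℚ) T
    have h3 : Cardinal.mk ↥T ≤ Cardinal.mk (Fin ((n+1)/2)) := by
      rw [hT]
      exact Cardinal.mk_range_le
    have h4 : Cardinal.mk (Fin ((n+1)/2)) = (((n + 1) / 2 : ℕ) : Cardinal) := by simp
    exact h1.trans (h2.trans (h3.trans_eq h4))
  · refine ⟨-1, fun i => (n:ℚ) * aa n (n-1) i 0, Or.inl (by norm_num), ?_⟩
    have hV := VC1 n hn1 (n-1) (by omega) 0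
    have hsum : ∑ k ∈ Finset.range ((n-1)/2+1),
        (((n:ℚ) * aa n (n-1) k 0 : ℚ) : ℝ) * (∫ t in Set.Ioi (0:ℝ), (K0 t)^n * t^(2*k+1))
        = (n:ℝ) * V n (n-1) 0 := by
      rw [hV, Finset.mul_sum]
      apply Finset.sum_congr rfl
      intro i _
      rw [hM i]
      push_cast
      rw [show (0:ℕ)+i = i from by omega]
      ring
    rw [hsum, R3 hn1]
    norm_num

theorem stmt8 (n : ℕ) (hn : 2 ≤ n) :
    Module.rank ℚ
      ↥(Submodule.span ℚ
        {x : ℝ | ∃ k : ℕ, x = ∫ t in Set.Ioi (0:ℝ), (K0 t)^n * t^(2 * k + 1)})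
      ≤ ((n + 1) / 2 : ℕ) ∧
    ∃ (c : ℚ) (g : ℕ → ℚ),
      (c ≠ 0 ∨ ∃ k ∈ Finset.range ((n - 1) / 2 + 1), g k ≠ 0) ∧
      (c : ℝ) + ∑ k ∈ Finset.range ((n - 1) / 2 + 1),
        (g k : ℝ) * ∫ t in Set.Ioi (0:ℝ), (K0 t)^n * t^(2 * k + 1) = 0 := by
  exact stmt8' n hn
end
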